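/- arXiv:1910.04609 — 6 statements merged into one kernel-verified Lean document; each statement's English description precedes it below -/
import Mathlib

section
/- Let d ≥ 5, let G be a d-regular graph, let Z ⊆ V(G) with |Z| = 2d−2, and let X ⊆ Z with |X| ≤ d−1 such that at least three vertices of X have exactly one neighbour in V(G)∖Z and every vertex of Z∖X has no neighbour in V(G)∖Z. If H is a subgraph of G that is a subdivision of K_{d+1} with branch-vertex set U (the vertices of degree d in H), then every vertex of Z ∩ U lies in X and has at least two neighbours in V(G)∖Z. -/
/-- `J` is a subdivision of `H` via the branch-vertex map `f`: each edge of `H`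
is replaced by a path in `J`, these paths being internally disjoint from each
other and from the branch vertices, and `J` consists exactly of these paths. -/
def IsSubdivisionOn {α β : Type*} (H : SimpleGraph α) (J : SimpleGraph β) (f : α → β) : Prop :=
  Function.Injective f ∧
  ∃ P : ∀ ⦃u v : α⦄, H.Adj u v → J.Walk (f u) (f v),
    (∀ ⦃u v⦄ (h : H.Adj u v), (P h).IsPath) ∧
    (∀ ⦃u v⦄ (h : H.Adj u v), P h.symm = (P h).reverse) ∧
    (∀ ⦃u v⦄ (h : H.Adj u v) (w : α), f w ∈ (P h).support → w = u ∨ w = v) ∧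
    (∀ ⦃u v u' v'⦄ (h : H.Adj u v) (h' : H.Adj u' v'), s(u, v) ≠ s(u', v') →
      ∀ x, x ∈ (P h).support → x ∈ (P h').support →
        (x = f u ∨ x = f v) ∧ (x = f u' ∨ x = f v')) ∧
    (∀ x : β, (∃ u, f u = x) ∨ ∃ u v, ∃ h : H.Adj u v, x ∈ (P h).support) ∧
    (∀ ⦃x y : β⦄, J.Adj x y → ∃ u v, ∃ h : H.Adj u v, s(x, y) ∈ (P h).edges)

/-- `J` is a subdivision of `H`. -/
def IsSubdivision {α β : Type*} (H : SimpleGraph α) (J : SimpleGraph β) : Prop :=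
  ∃ f : α → β, IsSubdivisionOn H J f

/-!
Internal vertices of a subdivision of `K_{d+1}` have degree at most two, so for `d ≥ 3` the
vertices of degree `d` are the branch vertices, and a branch vertex of degree `d` in the
`d`-regular graph `G` has all its `G`-neighbours in `H`.

If all `d + 1` branch vertices lay in `Z`, each of the `d - 3` other vertices of `Z` would have at
most two neighbours among them and at most `d - 4` in the rest of `Z`, hence at least two outside
`Z`. These vertices would all lie in `X`, and the three vertices of `X` with exactly one neighbour
outside `Z` would be branch vertices, so `|X| ≥ d`.

Hence some branch vertex `f c` lies outside `Z`. The `d` internally disjoint paths from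
`u = f a ∈ Z` to `f c` all leave `Z`, each through its own vertex of `X \ {u}` or its own edge from
`u` to a vertex outside `Z`. So `d ≤ |X \ {u}| + |N(u) \ Z|`, which forces `u ∈ X` and
`|N(u) \ Z| ≥ 2`.
-/

open SimpleGraph

namespace SimpleGraph

variable {V : Type*} {G : SimpleGraph V}

lemma Walk.IsPath.ncard_neighborSet_toSubgraph_le_two {u v : V} {p : G.Walk u v}
    (hp : p.IsPath) (w : V) : (p.toSubgraph.neighborSet w).ncard ≤ 2 := by
  by_cases hnil : p.Nil
  · cases hnil.eq
    rw [hnil.eq_nil]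
    simp
  by_cases hw : w ∈ p.support
  · obtain ⟨i, rfl, hi⟩ := Walk.mem_support_iff_exists_getVert.mp hw
    rcases Nat.eq_zero_or_pos i with rfl | hi0
    · simp [hp.neighborSet_toSubgraph_startpoint hnil]
    rcases hi.eq_or_lt with rfl | hlt
    · simp [hp.neighborSet_toSubgraph_endpoint hnil]
    · rw [hp.ncard_neighborSet_toSubgraph_internal_eq_two hi0.ne' hlt]
  · have : p.toSubgraph.neighborSet w = ∅ := by
      ext y
      simp only [Subgraph.mem_neighborSet, Set.mem_empty_iff_false, iff_false]
      exact fun h => hw (p.mem_verts_toSubgraph.mp (p.toSubgraph.edge_vert h))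
    simp [this]

lemma Subgraph.ncard_coe_neighborSet (H : G.Subgraph) (x : H.verts) :
    (H.coe.neighborSet x).ncard = (H.neighborSet x).ncard := by
  simpa only [Nat.card_coe_set_eq] using Nat.card_congr (H.coeNeighborSetEquiv x)

/-- Given the vertex condition, the edge condition only forbids two walks through the edge `st`. -/
def Walk.IsInternallyDisjoint {ι : Type*} {s t : V} (W : ι → G.Walk s t) : Prop :=
  Pairwise fun i j =>
    (∀ x ∈ (W i).support, x ∈ (W j).support → x = s ∨ x = t) ∧
      ∀ e ∈ (W i).edges, e ∉ (W j).edges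

theorem Walk.isInternallyDisjoint_of_support {ι : Type*} {s t : V} {W : ι → G.Walk s t}
    (hvert : Pairwise fun i j => ∀ x ∈ (W i).support, x ∈ (W j).support → x = s ∨ x = t)
    (hst : ∀ i j, s(s, t) ∈ (W i).edges → s(s, t) ∈ (W j).edges → i = j) :
    Walk.IsInternallyDisjoint W := by
  refine fun i j hij => ⟨hvert hij, fun e he he' => ?_⟩
  induction e using Sym2.ind with
  | _ x y =>
    have hxy := ((W i).adj_of_mem_edges he).ne
    have hx := hvert hij x ((W i).fst_mem_support_of_mem_edges he)
      ((W j).fst_mem_support_of_mem_edges he')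
    have hy := hvert hij y ((W i).snd_mem_support_of_mem_edges he)
      ((W j).snd_mem_support_of_mem_edges he')
    have hxy' : s(x, y) = s(s, t) := by
      rcases hx with rfl | rfl <;> rcases hy with rfl | rfl <;> simp_all [Sym2.eq_swap]
    rw [hxy'] at he he'
    exact hij (hst i j he he')

theorem Walk.IsInternallyDisjoint.card_le [Finite V] {ι : Type*} [Finite ι] {s t : V}
    {W : ι → G.Walk s t} (hW : Walk.IsInternallyDisjoint W) {S : Set V} (hs : s ∈ S)
    (ht : t ∉ S) :
    Nat.card ι ≤ {z ∈ S | z ≠ s ∧ ∃ z' ∉ S, G.Adj z z'}.ncard + (G.neighborSet s \ S).ncard := by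
  -- two walks share the tail of their exit darts only if it is `s`, and then not the head
  choose D hD hfst hsnd using fun i => (W i).exists_boundary_dart S hs ht
  have hfst_mem : ∀ i, (D i).fst ∈ (W i).support :=
    fun i => (W i).dart_fst_mem_support_of_mem_darts (hD i)
  have hleave : {i | (D i).fst ≠ s}.ncard ≤ {z ∈ S | z ≠ s ∧ ∃ z' ∉ S, G.Adj z z'}.ncard := by
    refine Set.ncard_le_ncard_of_injOn (fun i => (D i).fst)
      (fun i hi => ⟨hfst i, hi, (D i).snd, hsnd i, (D i).adj⟩) ?_
    intro i hi j _ (hij : (D i).fst = (D j).fst)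
    by_contra hne
    rcases (hW hne).1 _ (hfst_mem i) (hij ▸ hfst_mem j) with h | h
    · exact hi h
    · exact ht (h ▸ hfst i)
  have hstay : {i | (D i).fst ≠ s}ᶜ.ncard ≤ (G.neighborSet s \ S).ncard := by
    refine Set.ncard_le_ncard_of_injOn (fun i => (D i).snd) ?_ ?_
    · intro i hi
      simp only [Set.mem_compl_iff, Set.mem_ofPred_eq, not_not] at hi
      exact ⟨hi ▸ (D i).adj, hsnd i⟩
    · intro i hi j hj (hij : (D i).snd = (D j).snd)
      simp only [Set.mem_compl_iff, Set.mem_ofPred_eq, not_not] at hi hj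
      by_contra hne
      have hDij : D i = D j := Dart.ext _ _ (Prod.ext (hi.trans hj.symm) hij)
      exact (hW hne).2 _ (List.mem_map_of_mem (hD i)) (hDij ▸ List.mem_map_of_mem (hD j))
  have := Set.ncard_add_ncard_compl {i | (D i).fst ≠ s}
  omega

end SimpleGraph

lemma Set.ncard_add_one_le_of_mem_sdiff {V : Type*} [Finite V] {N B Z : Set V} {w : V}
    (hw : w ∈ Z \ B) (hwN : w ∉ N) :
    N.ncard + 1 ≤ (N ∩ B).ncard + (Z \ B).ncard + (N ∩ Zᶜ).ncard := by
  have hcover : insert w N ⊆ (N ∩ B) ∪ (Z \ B) ∪ (N ∩ Zᶜ) := by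
    rintro x (rfl | hx)
    · exact Or.inl (Or.inr hw)
    · by_cases hxZ : x ∈ Z <;> by_cases hxB : x ∈ B <;> simp [hx, hxZ, hxB]
  calc N.ncard + 1 = (insert w N).ncard := (Set.ncard_insert_of_notMem hwN).symm
    _ ≤ ((N ∩ B) ∪ (Z \ B) ∪ (N ∩ Zᶜ)).ncard := Set.ncard_le_ncard hcover
    _ ≤ ((N ∩ B) ∪ (Z \ B)).ncard + (N ∩ Zᶜ).ncard := Set.ncard_union_le _ _
    _ ≤ (N ∩ B).ncard + (Z \ B).ncard + (N ∩ Zᶜ).ncard := by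
      gcongr; exact Set.ncard_union_le _ _

namespace IsSubdivisionOn

section Abstract

variable {α β : Type*} {K : SimpleGraph α} {J : SimpleGraph β} {f : α → β}

lemma mem_edges_symm {P : ∀ ⦃u v : α⦄, K.Adj u v → J.Walk (f u) (f v)}
    (hsymm : ∀ ⦃u v⦄ (h : K.Adj u v), P h.symm = (P h).reverse) {u v : α} (h : K.Adj u v)
    {e : Sym2 β} : e ∈ (P h.symm).edges ↔ e ∈ (P h).edges := by
  rw [hsymm, Walk.edges_reverse, List.mem_reverse]

lemma ncard_neighborSet_le_two (hf : IsSubdivisionOn K J f) {x : β} (hx : x ∉ Set.range f) :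
    (J.neighborSet x).ncard ≤ 2 := by
  obtain ⟨-, P, hpath, hsymm, -, hdisj, -, hedge⟩ := hf
  rcases (J.neighborSet x).eq_empty_or_nonempty with hempty | ⟨y₀, hy₀⟩
  · simp [hempty]
  obtain ⟨u₀, v₀, h₀, he₀⟩ := hedge hy₀
  have hx₀ := (P h₀).fst_mem_support_of_mem_edges he₀
  suffices J.neighborSet x ⊆ (P h₀).toSubgraph.neighborSet x from
    (Set.ncard_le_ncard this (Walk.finite_neighborSet_toSubgraph _)).trans
      ((hpath h₀).ncard_neighborSet_toSubgraph_le_two x)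
  intro y hy
  obtain ⟨u, v, h, he⟩ := hedge hy
  rw [Subgraph.mem_neighborSet, Walk.adj_toSubgraph_iff_mem_edges]
  by_cases huv : s(u, v) = s(u₀, v₀)
  · rcases Sym2.eq_iff.mp huv with ⟨rfl, rfl⟩ | ⟨rfl, rfl⟩
    · exact he
    · exact (mem_edges_symm hsymm h₀).mp he
  · obtain ⟨hxu | hxv, -⟩ := hdisj h h₀ huv x ((P h).fst_mem_support_of_mem_edges he) hx₀
    · exact absurd ⟨u, hxu.symm⟩ hx
    · exact absurd ⟨v, hxv.symm⟩ hx

lemma ncard_neighborSet_apply (hf : IsSubdivisionOn K J f) (a : α) :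
    (J.neighborSet (f a)).ncard = (K.neighborSet a).ncard := by
  classical
  obtain ⟨hinj, P, hpath, hsymm, hbranch, hdisj, -, hedge⟩ := hf
  have hnil : ∀ {b} (h : K.Adj a b), ¬ (P h).Nil :=
    fun h => Walk.not_nil_of_ne (hinj.ne h.ne)
  let first : α → β := fun b => if h : K.Adj a b then (P h).snd else f a
  have hfirst : ∀ {b} (h : K.Adj a b), first b = (P h).snd := fun h => dif_pos h
  have himage : first '' K.neighborSet a = J.neighborSet (f a) := by
    ext y
    constructor
    · rintro ⟨b, hb, rfl⟩
      rw [hfirst hb]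
      exact Walk.adj_snd (hnil hb)
    · intro hy
      obtain ⟨u, v, h, he⟩ := hedge hy
      have hb : ∃ b, ∃ h : K.Adj a b, s(f a, y) ∈ (P h).edges := by
        rcases hbranch h a ((P h).fst_mem_support_of_mem_edges he) with rfl | rfl
        · exact ⟨v, h, he⟩
        · exact ⟨u, h.symm, (mem_edges_symm hsymm h).mpr he⟩
      obtain ⟨b, hab, hb⟩ := hb
      refine ⟨b, hab, ?_⟩
      rw [hfirst hab]
      exact (hpath hab).snd_of_toSubgraph_adj (Walk.adj_toSubgraph_iff_mem_edges.mpr hb)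
  have hinjOn : Set.InjOn first (K.neighborSet a) := by
    intro b hb b' hb' hbb'
    by_contra hne
    rw [hfirst hb, hfirst hb'] at hbb'
    have hsne : s(a, b) ≠ s(a, b') := fun h => hne (Sym2.congr_right.mp h)
    have hmem' : (P hb).snd ∈ (P hb').support := hbb' ▸ (P hb').getVert_mem_support 1
    obtain ⟨hfa | hfb, hfa' | hfb'⟩ :=
      hdisj hb hb' hsne _ ((P hb).getVert_mem_support 1) hmem'
    all_goals first
      | exact (Walk.adj_snd (hnil hb)).ne' ‹_›
      | exact hne (hinj (hfb.symm.trans hfb'))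
  rw [← himage, hinjOn.ncard_image]

theorem exists_isInternallyDisjoint (hf : IsSubdivisionOn (completeGraph α) J f) {a c : α}
    (hac : a ≠ c) :
    ∃ W : {b // b ≠ a} → J.Walk (f a) (f c), Walk.IsInternallyDisjoint W := by
  classical
  obtain ⟨hinj, P, -, -, hbranch, hdisj, -, -⟩ := hf
  let W : {b // b ≠ a} → J.Walk (f a) (f c) := fun b =>
    if hbc : b.1 = c then P hac else (P (Ne.symm b.2)).append (P hbc)
  -- `W b` runs along the paths of the edges `ab` and `bc` (just `ac = ab` if `b = c`)
  have hsupport : ∀ b x, x ∈ (W b).support → ∃ u v, ∃ h : (completeGraph α).Adj u v,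
      x ∈ (P h).support ∧ (s(u, v) = s(a, b.1) ∨ s(u, v) = s(b.1, c)) := by
    intro b x hx
    by_cases hbc : b.1 = c
    · simp only [W, dif_pos hbc] at hx
      exact ⟨a, c, hac, hx, Or.inl (by rw [hbc])⟩
    · simp only [W, dif_neg hbc, Walk.mem_support_append_iff] at hx
      rcases hx with hx | hx
      exacts [⟨_, _, _, hx, Or.inl rfl⟩, ⟨_, _, _, hx, Or.inr rfl⟩]
  have hedges : ∀ b e, e ∈ (W b).edges → ∃ u v, ∃ h : (completeGraph α).Adj u v,
      e ∈ (P h).edges ∧ (s(u, v) = s(a, b.1) ∨ s(u, v) = s(b.1, c)) := by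
    intro b e he
    by_cases hbc : b.1 = c
    · simp only [W, dif_pos hbc] at he
      exact ⟨a, c, hac, he, Or.inl (by rw [hbc])⟩
    · simp only [W, dif_neg hbc, Walk.edges_append, List.mem_append] at he
      rcases he with he | he
      exacts [⟨_, _, _, he, Or.inl rfl⟩, ⟨_, _, _, he, Or.inr rfl⟩]
  have hvert : Pairwise fun b b' : {b // b ≠ a} =>
      ∀ x ∈ (W b).support, x ∈ (W b').support → x = f a ∨ x = f c := by
    intro b b' hbb' x hx hx'
    obtain ⟨u, v, h, hxP, he⟩ := hsupport b x hx
    obtain ⟨u', v', h', hxP', he'⟩ := hsupport b' x hx'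
    by_cases heq : s(u, v) = s(u', v')
    · exfalso
      rw [heq] at he
      rcases he with he | he <;> rcases he' with he' | he' <;>
        rw [he'] at he <;> simp only [Sym2.eq_iff] at he <;> grind
    · obtain ⟨hx₁, hx₂⟩ := hdisj h h' heq x hxP hxP'
      simp only [Sym2.eq_iff] at he he'
      rcases hx₁ with rfl | rfl <;> rcases hx₂ with h₂ | h₂ <;> have := hinj h₂ <;> grind
  have hdirect : ∀ b, s(f a, f c) ∈ (W b).edges → b.1 = c := by
    intro b hb
    obtain ⟨u, v, h, he, huv⟩ := hedges b _ hb
    have ha := hbranch h a ((P h).fst_mem_support_of_mem_edges he)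
    have hc := hbranch h c ((P h).snd_mem_support_of_mem_edges he)
    have := b.2
    simp only [Sym2.eq_iff] at huv
    grind
  exact ⟨W, Walk.isInternallyDisjoint_of_support hvert fun b b' hb hb' =>
    Subtype.ext ((hdirect b hb).trans (hdirect b' hb').symm)⟩

end Abstract

section InSubgraph

variable {α V : Type*} {G : SimpleGraph V} {H : G.Subgraph} {f : α → H.verts}

lemma ncard_subgraph_neighborSet_le_two {K : SimpleGraph α} (hf : IsSubdivisionOn K H.coe f)
    {w : V} (hw : ∀ a, (f a : V) ≠ w) : (H.neighborSet w).ncard ≤ 2 := by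
  by_cases hwH : w ∈ H.verts
  · rw [← H.ncard_coe_neighborSet ⟨w, hwH⟩]
    exact hf.ncard_neighborSet_le_two fun ⟨a, ha⟩ => hw a (congrArg Subtype.val ha)
  · have : H.neighborSet w = ∅ :=
      Set.eq_empty_of_forall_notMem fun y hy => hwH (H.edge_vert hy)
    simp [this]

lemma ncard_subgraph_neighborSet_apply {K : SimpleGraph α} (hf : IsSubdivisionOn K H.coe f)
    (a : α) :
    (H.neighborSet (f a)).ncard = (K.neighborSet a).ncard := by
  rw [← H.ncard_coe_neighborSet, hf.ncard_neighborSet_apply]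

theorem card_le_ncard_sdiff_add_ncard_inter_compl [Finite V] [Finite α] {Z X : Set V}
    (hZX : ∀ x ∈ Z \ X, G.neighborSet x ∩ Zᶜ = ∅) (hf : IsSubdivisionOn (completeGraph α) H.coe f)
    {a c : α} (ha : (f a : V) ∈ Z) (hc : (f c : V) ∉ Z) :
    Nat.card α ≤ (X \ {(f a : V)}).ncard + (G.neighborSet (f a) ∩ Zᶜ).ncard + 1 := by
  obtain ⟨W, hW⟩ := hf.exists_isInternallyDisjoint fun hac : a = c => hc (hac ▸ ha)
  set S : Set H.verts := Subtype.val ⁻¹' Z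
  have hcount := hW.card_le (S := S) ha hc
  have hleave : {z ∈ S | z ≠ f a ∧ ∃ z' ∉ S, H.coe.Adj z z'}.ncard ≤ (X \ {(f a : V)}).ncard := by
    refine Set.ncard_le_ncard_of_injOn Subtype.val ?_ Subtype.val_injective.injOn
    rintro z ⟨hz, hza, z', hz', hadj⟩
    refine ⟨by_contra fun hzX => ?_, fun h => hza (Subtype.ext h)⟩
    exact Set.eq_empty_iff_forall_notMem.mp (hZX z ⟨hz, hzX⟩) z' ⟨H.adj_sub hadj, hz'⟩
  have hstay : (H.coe.neighborSet (f a) \ S).ncard ≤ (G.neighborSet (f a) ∩ Zᶜ).ncard :=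
    Set.ncard_le_ncard_of_injOn Subtype.val (fun z hz => ⟨H.adj_sub hz.1, hz.2⟩)
      Subtype.val_injective.injOn
  have hcard : Nat.card {b // b ≠ a} + 1 = Nat.card α := by
    have : Nonempty α := ⟨a⟩
    rw [show Nat.card {b // b ≠ a} = ({a}ᶜ : Set α).ncard from rfl, Set.ncard_compl,
      Set.ncard_singleton]
    have := Nat.card_pos (α := α)
    omega
  omega

theorem exists_apply_notMem [Finite V] [Finite α] {d : ℕ} (hd : 3 ≤ d) (hα : Nat.card α = d + 1)
    (hreg : ∀ v, (G.neighborSet v).ncard = d) {Z X : Set V} (hXZ : X ⊆ Z)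
    (hZcard : Z.ncard = 2 * d - 2) (hXcard : X.ncard ≤ d - 1)
    (hthree : 3 ≤ {x ∈ X | (G.neighborSet x ∩ Zᶜ).ncard = 1}.ncard)
    (hZX : ∀ x ∈ Z \ X, G.neighborSet x ∩ Zᶜ = ∅) (hf : IsSubdivisionOn (completeGraph α) H.coe f) :
    ∃ c, (f c : V) ∉ Z := by
  set S := {x ∈ X | (G.neighborSet x ∩ Zᶜ).ncard = 1}
  by_contra! hBZ
  set B := Set.range fun b => (f b : V)
  have hBZ : B ⊆ Z := Set.range_subset_iff.mpr hBZ
  have hZB : (Z \ B).ncard = d - 3 := by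
    have hinj : Function.Injective fun b => (f b : V) := Subtype.val_injective.comp hf.1
    rw [Set.ncard_sdiff hBZ, Set.ncard_range_of_injective hinj, hα, hZcard]
    omega
  have hfull : ∀ b, G.neighborSet (f b) = H.neighborSet (f b) := by
    intro b
    refine (Set.eq_of_subset_of_ncard_le (H.neighborSet_subset _) ?_).symm
    rw [hreg, hf.ncard_subgraph_neighborSet_apply, neighborSet_top, Set.ncard_compl,
      Set.ncard_singleton, hα]
    omega
  have hout : ∀ w ∈ Z \ B, 2 ≤ (G.neighborSet w ∩ Zᶜ).ncard := by
    intro w hw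
    -- the branch vertices are saturated, so `w` sees them in `H`, where it has degree `≤ 2`
    have hNB : G.neighborSet w ∩ B ⊆ H.neighborSet w := by
      rintro _ ⟨hwb, b, rfl⟩
      have : w ∈ H.neighborSet (f b) := hfull b ▸ G.adj_symm hwb
      exact H.adj_symm this
    have h2 := hf.ncard_subgraph_neighborSet_le_two fun b hb => hw.2 ⟨b, hb⟩
    have := Set.ncard_le_ncard hNB
    have := Set.ncard_add_one_le_of_mem_sdiff hw G.notMem_neighborSet_self
    rw [hreg] at this
    omega
  have hSB : S ⊆ B := by
    intro x hx
    by_contra hxB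
    have := hout x ⟨hXZ hx.1, hxB⟩
    rw [hx.2] at this
    omega
  have hZBX : Z \ B ⊆ X := by
    intro w hw
    by_contra hwX
    have := hout w hw
    rw [hZX w ⟨hw.1, hwX⟩, Set.ncard_empty] at this
    omega
  have : (Z \ B).ncard + S.ncard ≤ X.ncard := by
    rw [← Set.ncard_union_eq (Set.disjoint_of_subset_right hSB Set.disjoint_sdiff_left)]
    exact Set.ncard_le_ncard (Set.union_subset hZBX (Set.sep_subset X _))
  omega

end InSubgraph

end IsSubdivisionOn

theorem littlebag_general {V : Type*} [Fintype V] (d : ℕ)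
    (G : SimpleGraph V) (hreg : ∀ v : V, (G.neighborSet v).ncard = d)
    (Z X : Set V) (hXZ : X ⊆ Z) (hZcard : Z.ncard = 2 * d - 2)
    (hXcard : X.ncard ≤ d - 1)
    (hthree : 3 ≤ {x ∈ X | (G.neighborSet x ∩ Zᶜ).ncard = 1}.ncard)
    (hZX : ∀ x ∈ Z \ X, G.neighborSet x ∩ Zᶜ = ∅)
    (H : G.Subgraph)
    (hsub : IsSubdivision (SimpleGraph.completeGraph (Fin (d + 1))) H.coe) :
    ∀ u ∈ Z ∩ {x : V | (H.neighborSet x).ncard = d},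
      u ∈ X ∧ 2 ≤ (G.neighborSet u ∩ Zᶜ).ncard := by
  obtain ⟨f, hf⟩ := hsub
  have hd : 3 ≤ d := by
    have := Set.ncard_le_ncard (Set.sep_subset X _) |>.trans' hthree
    omega
  rintro u ⟨huZ, hudeg : (H.neighborSet u).ncard = d⟩
  obtain ⟨a, rfl⟩ : ∃ a, (f a : V) = u := by
    by_contra! hu
    have := hf.ncard_subgraph_neighborSet_le_two hu
    omega
  obtain ⟨c, hc⟩ := hf.exists_apply_notMem hd (by simp) hreg hXZ hZcard hXcard hthree hZX
  have hcount := hf.card_le_ncard_sdiff_add_ncard_inter_compl hZX huZ hc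
  rw [Nat.card_fin] at hcount
  have hX : (f a : V) ∈ X := by
    by_contra hX
    rw [hZX _ ⟨huZ, hX⟩, Set.sdiff_singleton_eq_self hX, Set.ncard_empty] at hcount
    omega
  rw [Set.ncard_sdiff_singleton_of_mem hX] at hcount
  exact ⟨hX, by omega⟩

/-- Let `d ≥ 5`, `G` a `d`-regular graph, `Z ⊆ V(G)` with `|Z| = 2d-2`, and
`X ⊆ Z` with `|X| ≤ d-1` such that at least three vertices of `X` have exactly
one neighbour outside `Z` and every vertex of `Z∖X` has no neighbour outside
`Z`. If `H` is a subgraph of `G` that is a subdivision of `K_{d+1}` with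
branch-vertex set `U`, then every vertex of `Z ∩ U` lies in `X` and has at
least two neighbours outside `Z`. -/
theorem littlebag {V : Type*} [Fintype V] (d : ℕ) (hd : 5 ≤ d)
    (G : SimpleGraph V) (hreg : ∀ v : V, (G.neighborSet v).ncard = d)
    (Z X : Set V) (hXZ : X ⊆ Z) (hZcard : Z.ncard = 2 * d - 2)
    (hXcard : X.ncard ≤ d - 1)
    (hthree : 3 ≤ {x ∈ X | (G.neighborSet x ∩ Zᶜ).ncard = 1}.ncard)
    (hZX : ∀ x ∈ Z \ X, G.neighborSet x ∩ Zᶜ = ∅)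
    (H : G.Subgraph)
    (hsub : IsSubdivision (SimpleGraph.completeGraph (Fin (d + 1))) H.coe) :
    ∀ u ∈ Z ∩ {x : V | (H.neighborSet x).ncard = d},
      u ∈ X ∧ 2 ≤ (G.neighborSet u ∩ Zᶜ).ncard :=
  littlebag_general d G hreg Z X hXZ hZcard hXcard hthree hZX H hsub
end

section
/- Let 𝒯 be a tangle in a graph G and let W ⊆ V(G) be free relative to 𝒯 (i.e. the minimum order of a separation (A,B) ∈ 𝒯 with W ⊆ V(A) equals |W|, or no such separation exists and |W| is at least the order of 𝒯; here assume such separations exist). Then there exists (A₁,B₁) ∈ 𝒯 of order |W| with W ⊆ V(A₁) such that A ⊆ A₁ and B₁ ⊆ B for every (A,B) ∈ 𝒯 of order |W| with W ⊆ V(A). -/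
/-- A separation of a graph `G`: a pair `(A, B)` of subgraphs with union `G`
and no edges in `A ⊓ B`. -/
structure Separation {V : Type*} (G : SimpleGraph V) where
  A : G.Subgraph
  B : G.Subgraph
  union_eq : A ⊔ B = ⊤
  edge_inter : (A ⊓ B).edgeSet = ∅

namespace Separation

variable {V : Type*} {G : SimpleGraph V}

/-- The order of a separation: the number of vertices in `V(A) ∩ V(B)`. -/
noncomputable def order (S : Separation G) : ℕ := (S.A.verts ∩ S.B.verts).ncard

/-- The reversed orientation of a separation. -/
def flip (S : Separation G) : Separation G :=
  ⟨S.B, S.A, by rw [sup_comm]; exact S.union_eq, by rw [inf_comm]; exact S.edge_inter⟩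

end Separation

/-- A tangle of order `θ` in `G`: an orientation of all separations of order
`< θ` satisfying the three tangle axioms. -/
structure Tangle {V : Type*} (G : SimpleGraph V) (θ : ℕ) where
  mem : Set (Separation G)
  order_lt : ∀ S ∈ mem, S.order < θ
  oriented : ∀ S : Separation G, S.order < θ → S ∈ mem ∨ S.flip ∈ mem
  not_three : ∀ S₁ ∈ mem, ∀ S₂ ∈ mem, ∀ S₃ ∈ mem,
    S₁.A ⊔ S₂.A ⊔ S₃.A ≠ (⊤ : G.Subgraph)
  small : ∀ S ∈ mem, S.A.verts ≠ Set.univ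

/-- The rank of a vertex set `X` relative to a tangle: the minimum order of a
separation `(A,B)` in the tangle with `X ⊆ V(A)`, or `θ` if there is none. -/
noncomputable def Tangle.rank {V : Type*} {G : SimpleGraph V} {θ : ℕ}
    (T : Tangle G θ) (X : Set V) : ℕ :=
  sInf ({θ} ∪ {n | ∃ S ∈ T.mem, X ⊆ S.A.verts ∧ S.order = n})

section Aux

variable {V : Type*} {G : SimpleGraph V}

lemma subgraph_eq_of_verts_edgeSet {H K : G.Subgraph} (hv : H.verts = K.verts)
    (he : H.edgeSet = K.edgeSet) : H = K := by
  ext u v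
  · rw [hv]
  · rw [← SimpleGraph.Subgraph.mem_edgeSet, ← SimpleGraph.Subgraph.mem_edgeSet, he]

lemma finite_subgraph [Finite V] : Finite (G.Subgraph) := by
  apply Finite.of_injective (fun H : G.Subgraph => (H.verts, H.Adj))
  intro H K h
  simp only [Prod.mk.injEq] at h
  exact SimpleGraph.Subgraph.ext h.1 h.2

lemma finite_separation [Finite V] : Finite (Separation G) := by
  have := finite_subgraph (G := G)
  apply Finite.of_injective (fun S : Separation G => (S.A, S.B))
  rintro ⟨A, B, _, _⟩ ⟨A', B', _, _⟩ h
  simp only [Prod.mk.injEq] at h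
  obtain ⟨rfl, rfl⟩ := h
  rfl

lemma submod [Finite V] (a a₁ b b₁ : Set V) :
    ((a ∪ a₁) ∩ (b ∩ b₁)).ncard + ((a ∩ a₁) ∩ (b ∪ b₁)).ncard ≤
      (a ∩ b).ncard + (a₁ ∩ b₁).ncard := by
  set X := (a ∪ a₁) ∩ (b ∩ b₁)
  set Y := (a ∩ a₁) ∩ (b ∪ b₁)
  have hXY : X ∪ Y ⊆ (a ∩ b) ∪ (a₁ ∩ b₁) := by
    intro v hv
    simp only [X, Y, Set.mem_union, Set.mem_inter_iff] at hv ⊢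
    tauto
  have hI : X ∩ Y ⊆ (a ∩ b) ∩ (a₁ ∩ b₁) := by
    intro v hv
    simp only [X, Y, Set.mem_union, Set.mem_inter_iff] at hv ⊢
    tauto
  calc X.ncard + Y.ncard = (X ∪ Y).ncard + (X ∩ Y).ncard :=
        (Set.ncard_union_add_ncard_inter X Y (Set.toFinite _) (Set.toFinite _)).symm
    _ ≤ ((a ∩ b) ∪ (a₁ ∩ b₁)).ncard + ((a ∩ b) ∩ (a₁ ∩ b₁)).ncard := by
        exact add_le_add (Set.ncard_le_ncard hXY (Set.toFinite _))
          (Set.ncard_le_ncard hI (Set.toFinite _))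
    _ = (a ∩ b).ncard + (a₁ ∩ b₁).ncard :=
        Set.ncard_union_add_ncard_inter _ _ (Set.toFinite _) (Set.toFinite _)

/-- The "union" separation `(A ⊔ A', B ⊓ B')`. -/
def sepSup (S S' : Separation G) : Separation G where
  A := S.A ⊔ S'.A
  B := S.B ⊓ S'.B
  union_eq := by
    rw [sup_inf_left]
    have h1 : S.A ⊔ S'.A ⊔ S.B = ⊤ := by
      rw [sup_right_comm, S.union_eq, top_sup_eq]
    have h2 : S.A ⊔ S'.A ⊔ S'.B = ⊤ := by
      rw [sup_assoc, S'.union_eq, sup_top_eq]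
    rw [h1, h2, top_inf_eq]
  edge_inter := by
    have h := S.edge_inter
    have h' := S'.edge_inter
    rw [SimpleGraph.Subgraph.edgeSet_inf] at h h'
    rw [Set.eq_empty_iff_forall_notMem] at h h' ⊢
    intro e he
    simp only [SimpleGraph.Subgraph.edgeSet_inf, SimpleGraph.Subgraph.edgeSet_sup,
      Set.mem_inter_iff, Set.mem_union] at he
    have := h e; have := h' e
    simp only [Set.mem_inter_iff] at *
    tauto

/-- The "intersection" separation `(A ⊓ A', B ⊔ B')`. -/
def sepInf (S S' : Separation G) : Separation G where
  A := S.A ⊓ S'.A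
  B := S.B ⊔ S'.B
  union_eq := by
    rw [sup_comm, sup_inf_left]
    have h1 : S.B ⊔ S'.B ⊔ S.A = ⊤ := by
      rw [sup_right_comm, sup_comm S.B S.A, S.union_eq, top_sup_eq]
    have h2 : S.B ⊔ S'.B ⊔ S'.A = ⊤ := by
      rw [sup_assoc, sup_comm S'.B S'.A, S'.union_eq, sup_top_eq]
    rw [h1, h2, top_inf_eq]
  edge_inter := by
    have h := S.edge_inter
    have h' := S'.edge_inter
    rw [SimpleGraph.Subgraph.edgeSet_inf] at h h'
    rw [Set.eq_empty_iff_forall_notMem] at h h' ⊢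
    intro e he
    simp only [SimpleGraph.Subgraph.edgeSet_inf, SimpleGraph.Subgraph.edgeSet_sup,
      Set.mem_inter_iff, Set.mem_union] at he
    have := h e; have := h' e
    simp only [Set.mem_inter_iff] at *
    tauto

end Aux

/-- If `W` is free relative to a tangle `𝒯` (every separation of `𝒯` with `W`
on the small side has order at least `|W|`, and some such separation of order
exactly `|W|` exists), then there is a maximal such separation `(A₁,B₁)`:
`A ⊆ A₁` and `B₁ ⊆ B` for every `(A,B) ∈ 𝒯` of order `|W|` with `W ⊆ V(A)`. -/
theorem free_maximal_separation {V : Type*} [Fintype V] {G : SimpleGraph V} {θ : ℕ}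
    (T : Tangle G θ) (W : Set V)
    (hfree : ∀ S ∈ T.mem, W ⊆ S.A.verts → W.ncard ≤ S.order)
    (hex : ∃ S ∈ T.mem, W ⊆ S.A.verts ∧ S.order = W.ncard) :
    ∃ S₁ ∈ T.mem, W ⊆ S₁.A.verts ∧ S₁.order = W.ncard ∧
      ∀ S ∈ T.mem, W ⊆ S.A.verts → S.order = W.ncard →
        S.A ≤ S₁.A ∧ S₁.B ≤ S.B := by
  classical
  set n := W.ncard with hn
  -- the set of candidate separations
  set 𝒮 : Set (Separation G) := {S | S ∈ T.mem ∧ W ⊆ S.A.verts ∧ S.order = n} with h𝒮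
  have h𝒮ne : 𝒮.Nonempty := by
    obtain ⟨S, hS, hW, ho⟩ := hex
    exact ⟨S, hS, hW, ho⟩
  have hfin : (𝒮 : Set (Separation G)).Finite := by
    have := finite_separation (G := G)
    exact Set.toFinite _
  -- weight function: big A side, small B side
  set μ : Separation G → ℤ := fun S =>
    ((S.A.verts.ncard : ℤ) + S.A.edgeSet.ncard) - ((S.B.verts.ncard : ℤ) + S.B.edgeSet.ncard)
    with hμ
  obtain ⟨S₁, hS₁𝒮, hmax⟩ := Set.exists_max_image 𝒮 μ hfin h𝒮ne
  obtain ⟨hS₁mem, hS₁W, hS₁ord⟩ := hS₁𝒮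
  have hnθ : n < θ := hS₁ord ▸ T.order_lt S₁ hS₁mem
  refine ⟨S₁, hS₁mem, hS₁W, hS₁ord, ?_⟩
  intro S hSmem hSW hSord
  -- the sup and inf separations
  set Ssup := sepSup S S₁ with hSsup
  set Sinf := sepInf S S₁ with hSinf
  have hsupA : Ssup.A = S.A ⊔ S₁.A := rfl
  have hsupB : Ssup.B = S.B ⊓ S₁.B := rfl
  have hsup_ord : Ssup.order = ((S.A.verts ∪ S₁.A.verts) ∩ (S.B.verts ∩ S₁.B.verts)).ncard := by
    simp [Separation.order, hsupA, hsupB, SimpleGraph.Subgraph.verts_sup,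
      SimpleGraph.Subgraph.verts_inf]
  have hinf_ord : Sinf.order = ((S.A.verts ∩ S₁.A.verts) ∩ (S.B.verts ∪ S₁.B.verts)).ncard := by
    simp [Separation.order, Sinf, sepInf, SimpleGraph.Subgraph.verts_sup,
      SimpleGraph.Subgraph.verts_inf]
  have hsubmod : Ssup.order + Sinf.order ≤ n + n := by
    rw [hsup_ord, hinf_ord]
    calc ((S.A.verts ∪ S₁.A.verts) ∩ (S.B.verts ∩ S₁.B.verts)).ncard +
        ((S.A.verts ∩ S₁.A.verts) ∩ (S.B.verts ∪ S₁.B.verts)).ncard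
        ≤ S.order + S₁.order := submod _ _ _ _
      _ = n + n := by rw [hSord, hS₁ord]
  -- the inf separation has order ≥ n
  have hinf_ge : n ≤ Sinf.order := by
    by_cases hlt : Sinf.order < θ
    · rcases T.oriented Sinf hlt with hmem | hmem
      · apply hfree Sinf hmem
        have : (Sinf.A).verts = S.A.verts ∩ S₁.A.verts := rfl
        rw [this]
        exact Set.subset_inter hSW hS₁W
      · exfalso
        apply T.not_three S hSmem S hSmem Sinf.flip hmem
        have : Sinf.flip.A = S.B ⊔ S₁.B := rfl
        rw [this, sup_idem, ← sup_assoc, S.union_eq, top_sup_eq]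
    · push_neg at hlt
      exact le_trans hnθ.le hlt
  -- hence the sup separation has order ≤ n, so < θ
  have hsup_le : Ssup.order ≤ n := by omega
  -- the sup separation is in the tangle
  have hsupW : W ⊆ Ssup.A.verts := by
    have : Ssup.A.verts = S.A.verts ∪ S₁.A.verts := by
      rw [hsupA, SimpleGraph.Subgraph.verts_sup]
    rw [this]
    exact hSW.trans Set.subset_union_left
  have hsupmem : Ssup ∈ T.mem := by
    rcases T.oriented Ssup (lt_of_le_of_lt hsup_le hnθ) with hmem | hmem
    · exact hmem
    · exfalso
      apply T.not_three S hSmem S₁ hS₁mem Ssup.flip hmem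
      have : Ssup.flip.A = S.B ⊓ S₁.B := rfl
      rw [this, sup_inf_left]
      have h1 : S.A ⊔ S₁.A ⊔ S.B = ⊤ := by
        rw [sup_right_comm, S.union_eq, top_sup_eq]
      have h2 : S.A ⊔ S₁.A ⊔ S₁.B = ⊤ := by
        rw [sup_assoc, S₁.union_eq, sup_top_eq]
      rw [h1, h2, top_inf_eq]
  have hsup_ord_eq : Ssup.order = n := le_antisymm hsup_le (hfree Ssup hsupmem hsupW)
  have hsup𝒮 : Ssup ∈ 𝒮 := ⟨hsupmem, hsupW, hsup_ord_eq⟩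
  -- compare weights
  have hAle : S₁.A ≤ Ssup.A := by rw [hsupA]; exact le_sup_right
  have hBle : Ssup.B ≤ S₁.B := by rw [hsupB]; exact inf_le_right
  have hμle := hmax Ssup hsup𝒮
  -- each piece is monotone
  have hv : S₁.A.verts.ncard ≤ Ssup.A.verts.ncard :=
    Set.ncard_le_ncard hAle.1 (Set.toFinite _)
  have he : S₁.A.edgeSet.ncard ≤ Ssup.A.edgeSet.ncard :=
    Set.ncard_le_ncard (SimpleGraph.Subgraph.edgeSet_mono hAle) (Set.toFinite _)
  have hv' : Ssup.B.verts.ncard ≤ S₁.B.verts.ncard :=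
    Set.ncard_le_ncard hBle.1 (Set.toFinite _)
  have he' : Ssup.B.edgeSet.ncard ≤ S₁.B.edgeSet.ncard :=
    Set.ncard_le_ncard (SimpleGraph.Subgraph.edgeSet_mono hBle) (Set.toFinite _)
  have hveq : S₁.A.verts.ncard = Ssup.A.verts.ncard ∧
      S₁.A.edgeSet.ncard = Ssup.A.edgeSet.ncard ∧
      Ssup.B.verts.ncard = S₁.B.verts.ncard ∧
      Ssup.B.edgeSet.ncard = S₁.B.edgeSet.ncard := by
    simp only [hμ] at hμle
    omega
  obtain ⟨e1, e2, e3, e4⟩ := hveq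
  have hAeq : Ssup.A = S₁.A := by
    apply (subgraph_eq_of_verts_edgeSet ?_ ?_).symm
    · exact Set.eq_of_subset_of_ncard_le hAle.1 e1.ge (Set.toFinite _)
    · exact Set.eq_of_subset_of_ncard_le (SimpleGraph.Subgraph.edgeSet_mono hAle)
        e2.ge (Set.toFinite _)
  have hBeq : Ssup.B = S₁.B := by
    apply subgraph_eq_of_verts_edgeSet
    · exact Set.eq_of_subset_of_ncard_le hBle.1 e3.ge (Set.toFinite _)
    · exact Set.eq_of_subset_of_ncard_le (SimpleGraph.Subgraph.edgeSet_mono hBle)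
        e4.ge (Set.toFinite _)
  constructor
  · rw [← hAeq, hsupA]; exact le_sup_left
  · rw [← hBeq, hsupB]; exact inf_le_left
end

section
/- Let 𝒯 be a tangle of order θ in G, let W ⊆ V(G) be free relative to 𝒯 with separations of 𝒯 of order |W| containing W on the small side existing, and let (A₁,B₁) be the maximal such separation (A ⊆ A₁ for all (A,B) ∈ 𝒯 of order |W| with W ⊆ V(A)). Then for every vertex v ∈ V(B₁) ∖ V(A₁), the set W is free relative to the tangle 𝒯 ∖ {v} in G ∖ v. -/
/-- Let `W` be free relative to a tangle `𝒯`, and let `(A₁,B₁)` be the maximal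
separation of `𝒯` of order `|W|` with `W ⊆ V(A₁)`. Then for every vertex
`v ∈ V(B₁) ∖ V(A₁)`, `W` is free relative to the tangle `𝒯 ∖ {v}` in `G ∖ v`:
every separation of `𝒯` with `v ∈ V(A ∩ B)` and `W ⊆ V(A)` (i.e. every member
`(A ∖ v, B ∖ v)` of `𝒯 ∖ {v}` with `W` on the small side) has
`|V(A ∩ B) ∖ {v}| ≥ |W|`, that is, order at least `|W| + 1`. -/
theorem free_after_deletion {V : Type*} [Fintype V] {G : SimpleGraph V} {θ : ℕ}
    (T : Tangle G θ) (W : Set V)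
    (hfree : ∀ S ∈ T.mem, W ⊆ S.A.verts → W.ncard ≤ S.order)
    (S₁ : Separation G) (hS₁ : S₁ ∈ T.mem)
    (hW₁ : W ⊆ S₁.A.verts) (hord₁ : S₁.order = W.ncard)
    (hmax : ∀ S ∈ T.mem, W ⊆ S.A.verts → S.order = W.ncard →
      S.A ≤ S₁.A ∧ S₁.B ≤ S.B)
    (v : V) (hv : v ∈ S₁.B.verts) (hv' : v ∉ S₁.A.verts) :
    ∀ S ∈ T.mem, v ∈ S.A.verts → v ∈ S.B.verts → W ⊆ S.A.verts →
      W.ncard + 1 ≤ S.order := by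
  intro S hS hvA _ hW
  have hle := hfree S hS hW
  rcases lt_or_eq_of_le hle with h | h
  · omega
  · exact absurd ((hmax S hS hW h.symm).1.1 hvA) hv'
end

section
/- Let d', k ≥ 0 be integers, let G be a graph with maximum degree at most d', and let 𝒯 be a tangle in G of order at least (k+1)². Let v ∈ V(G) and let 𝒫 be a set of paths of G each with one end v, such that each path in 𝒫 has rank at most k relative to 𝒯. Then the union of the vertex sets of the paths in 𝒫 has rank at most (k d')^k relative to 𝒯. -/
/-!
Induction on `k`, for nexuses avoiding a vertex set `X` with ranks taken in the restricted tangle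
`T ∖ X`. Among the separations `(A₀, B₀)` of `T ∖ X` of order at most `k + 1` with `v ∈ A₀` and
`A₀ - X` reachable from `v` inside itself, take one with `A₀` maximal. Let `(A, B)` witness the
rank of a path `P`. If `∂(A, B)` meets `A₀` only in `X`, then attaching to `(A₀, B₀)` the part of
`A` reachable from `v` does not raise the order, so maximality puts `P` inside `A₀`. Otherwise
`∂(A, B)` has a vertex in `A₀ \ X`, and the part of `P` outside `A₀` has rank at most `k - 1` in
`T ∖ ∂(A₀, B₀)`. Each segment of a path outside `A₀` starts at one of the at most `(k + 1) d'`
neighbours of `∂(A₀, B₀) \ X`; by induction, the segments starting at one neighbour lie in a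
single separation of order at most `f(k - 1)` in `T ∖ ∂(A₀, B₀)`, and the union of `(A₀, B₀)`
with these separations is again in the tangle, of order at most
`f(k) = (k + 1) + (k + 1) d' f(k - 1) ≤ (k d')^k`.

For `d' = 0` every path is trivial, and a tangle of order at least `2` contains `({v}, G - v)`.
-/

open SimpleGraph

lemma SimpleGraph.Subgraph.eq_top_of_forall {V : Type*} {G : SimpleGraph V} (H : G.Subgraph)
    (hv : ∀ x, x ∈ H.verts) (he : ∀ ⦃a b⦄, G.Adj a b → H.Adj a b) : H = ⊤ :=
  Subgraph.ext (Set.eq_univ_of_forall hv) <| funext₂ fun _ _ ↦ propext ⟨(·.adj_sub), (he ·)⟩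

lemma Set.ncard_biUnion_le_ncard_mul {ι α : Type*} {t : Set ι} (ht : t.Finite) {s : ι → Set α}
    {n : ℕ} (h : ∀ i ∈ t, (s i).ncard ≤ n) : (⋃ i ∈ t, s i).ncard ≤ t.ncard * n := by
  lift t to Finset ι using ht
  simpa using (t.set_ncard_biUnion_le s).trans (t.sum_le_card_nsmul _ _ h)

namespace SimpleGraph

variable {V : Type*} (G : SimpleGraph V)

def reachWithin (D : Set V) (w : V) : Set V :=
  {a | ∃ p : G.Walk w a, ∀ x ∈ p.support, x ∈ D}

variable {G} {C D D' : Set V} {w a b x : V}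

lemma reachWithin_subset : G.reachWithin D w ⊆ D :=
  fun _ ⟨p, hp⟩ ↦ hp _ p.end_mem_support

lemma start_mem_reachWithin (hw : w ∈ D) : w ∈ G.reachWithin D w :=
  ⟨.nil, by simpa using hw⟩

lemma mem_reachWithin_of_mem_support {p : G.Walk w a} (hp : ∀ y ∈ p.support, y ∈ D)
    (hx : x ∈ p.support) : x ∈ G.reachWithin D w := by
  classical
  exact ⟨p.takeUntil x hx, fun y hy ↦ hp y (p.support_takeUntil_subset_support hx hy)⟩

lemma reachWithin_mono (h : D ⊆ D') : G.reachWithin D w ⊆ G.reachWithin D' w :=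
  fun _ ⟨p, hp⟩ ↦ ⟨p, fun y hy ↦ h (hp y hy)⟩

lemma mem_reachWithin_of_adj (ha : a ∈ G.reachWithin D w) (hab : G.Adj a b) (hb : b ∈ D) :
    b ∈ G.reachWithin D w := by
  obtain ⟨p, hp⟩ := ha
  refine ⟨p.concat hab, fun y hy ↦ ?_⟩
  rw [Walk.support_concat, List.mem_append, List.mem_singleton] at hy
  exact hy.elim (hp y) (· ▸ hb)

lemma reachWithin_subset_reachWithin_reachWithin :
    G.reachWithin D w ⊆ G.reachWithin (G.reachWithin D w) w :=
  fun _ ⟨_, hp⟩ ↦ ⟨_, fun _ hy ↦ mem_reachWithin_of_mem_support hp hy⟩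

lemma reachWithin_subset_of_closed (hw : w ∈ C)
    (hC : ∀ a ∈ C, ∀ b, a ∈ D → b ∈ D → G.Adj a b → b ∈ C) : G.reachWithin D w ⊆ C := by
  suffices ∀ {u a} (p : G.Walk u a), u ∈ C → (∀ y ∈ p.support, y ∈ D) → a ∈ C from
    fun _ ⟨p, hp⟩ ↦ this p hw hp
  intro u a p
  induction p with
  | nil => exact fun hu _ ↦ hu
  | cons h p ih =>
    exact fun hu hp ↦
      ih (hC _ hu _ (hp _ (by simp)) (hp _ (by simp)) h) fun y hy ↦ hp y (by simp [hy])

lemma Walk.exists_adj_walk_notMem {S : Set V} {a b : V} (p : G.Walk a b) (ha : a ∉ S)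
    (hb : b ∈ S) : ∃ z ∈ S, z ∈ p.support ∧ ∃ x, G.Adj z x ∧
      ∃ r : G.Walk x a, ∀ c ∈ r.support, c ∈ p.support ∧ c ∉ S := by
  induction p with
  | nil => exact absurd hb ha
  | @cons a c b h p ih =>
    by_cases hc : c ∈ S
    · exact ⟨c, hc, by simp, a, h.symm, .nil, by simpa using ha⟩
    obtain ⟨z, hz, hzp, x, hzx, r, hr⟩ := ih hc hb
    refine ⟨z, hz, by simp [hzp], x, hzx, r.concat h.symm, fun y hy ↦ ?_⟩
    rw [Walk.support_concat, List.mem_append, List.mem_singleton] at hy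
    rcases hy with hy | rfl
    · exact ⟨by simp [(hr y hy).1], (hr y hy).2⟩
    · exact ⟨by simp, ha⟩

end SimpleGraph

namespace Separation

variable {V : Type*} {G : SimpleGraph V}

def boundary (S : Separation G) : Set V := S.A.verts ∩ S.B.verts

lemma order_eq_ncard_boundary (S : Separation G) : S.order = S.boundary.ncard := rfl

@[simp] lemma flip_A (S : Separation G) : S.flip.A = S.B := rfl

lemma mem_A_or_mem_B (S : Separation G) (x : V) : x ∈ S.A.verts ∨ x ∈ S.B.verts := by
  have h := congrArg Subgraph.verts S.union_eq
  rw [Subgraph.verts_sup, Subgraph.verts_top] at h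
  exact Set.eq_univ_iff_forall.1 h x

lemma adj_A_or_adj_B (S : Separation G) {a b : V} (h : G.Adj a b) : S.A.Adj a b ∨ S.B.Adj a b := by
  rw [← Subgraph.sup_adj, S.union_eq]
  exact h

lemma not_adj_B_of_adj_A (S : Separation G) {a b : V} (hA : S.A.Adj a b) : ¬S.B.Adj a b :=
  fun hB ↦ (Set.eq_empty_iff_forall_notMem.1 S.edge_inter) s(a, b) ⟨hA, hB⟩

lemma mem_boundary_of_adj (S : Separation G) {z x : V} (hz : z ∈ S.A.verts)
    (hx : x ∉ S.A.verts) (h : G.Adj z x) : z ∈ S.boundary :=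
  ⟨hz, ((S.adj_A_or_adj_B h).resolve_left fun hA ↦ hx hA.snd_mem).fst_mem⟩

def ofCover (A B : G.Subgraph) (hv : ∀ x, x ∈ A.verts ∨ x ∈ B.verts)
    (he : ∀ ⦃a b⦄, G.Adj a b → A.Adj a b ∨ B.Adj a b) (hd : ∀ ⦃a b⦄, A.Adj a b → ¬B.Adj a b) :
    Separation G where
  A := A
  B := B
  union_eq := Subgraph.eq_top_of_forall _ hv he
  edge_inter := Set.eq_empty_iff_forall_notMem.2 fun e ↦ e.ind fun _ _ h ↦ hd h.1 h.2

def ofVerts (W : Set V) : Separation G :=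
  ofCover ((⊥ : G.Subgraph).induce W) ⊤ (fun _ ↦ Or.inr trivial) (fun _ _ h ↦ Or.inr h)
    (fun _ _ h ↦ (Subgraph.not_bot_adj h.2.2).elim)

@[simp] lemma ofVerts_A_verts (W : Set V) : (ofVerts (G := G) W).A.verts = W := rfl
@[simp] lemma boundary_ofVerts (W : Set V) : (ofVerts (G := G) W).boundary = W :=
  Set.inter_univ W
@[simp] lemma order_ofVerts (W : Set V) : (ofVerts (G := G) W).order = W.ncard := by
  rw [order_eq_ncard_boundary, boundary_ofVerts]

def union (S₁ S₂ : Separation G) : Separation G :=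
  ofCover (S₁.A ⊔ S₂.A) (S₁.B ⊓ S₂.B)
    (fun x ↦ by
      rcases S₁.mem_A_or_mem_B x with h₁ | h₁ <;> rcases S₂.mem_A_or_mem_B x with h₂ | h₂ <;>
        simp [h₁, h₂])
    (fun _ _ h ↦ by
      rcases S₁.adj_A_or_adj_B h with h₁ | h₁ <;> rcases S₂.adj_A_or_adj_B h with h₂ | h₂ <;>
        simp [h₁, h₂])
    (fun _ _ hA hB ↦ hA.elim (S₁.not_adj_B_of_adj_A · hB.1) (S₂.not_adj_B_of_adj_A · hB.2))

lemma boundary_union_subset (S₁ S₂ : Separation G) :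
    (S₁.union S₂).boundary ⊆ S₁.boundary ∩ S₂.B.verts ∪ S₂.boundary ∩ S₁.B.verts := by
  rintro x ⟨hA | hA, hB₁, hB₂⟩
  · exact Or.inl ⟨⟨hA, hB₁⟩, hB₂⟩
  · exact Or.inr ⟨⟨hA, hB₂⟩, hB₁⟩

instance [Finite V] : Finite (Separation G) :=
  Finite.of_injective (fun S ↦ (S.A, S.B)) fun S S' h ↦ by cases S; cases S'; simp_all

def restrictA (S : Separation G) (K : Set V)
    (hK : ∀ ⦃a b⦄, S.A.Adj a b → a ∈ K → b ∉ K → a ∈ S.B.verts) : Separation G :=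
  ofCover (S.A.induce K)
    { verts := S.B.verts ∪ (S.A.verts \ K)
      Adj := fun a b ↦ S.B.Adj a b ∨ (S.A.Adj a b ∧ ¬(a ∈ K ∧ b ∈ K))
      adj_sub := fun h ↦ h.elim (·.adj_sub) (·.1.adj_sub)
      edge_vert := by
        rintro a b (h | ⟨h, hab⟩)
        · exact Or.inl h.fst_mem
        · by_cases ha : a ∈ K
          · exact Or.inl (hK h ha fun hb ↦ hab ⟨ha, hb⟩)
          · exact Or.inr ⟨h.fst_mem, ha⟩
      symm := ⟨fun _ _ h ↦ h.imp (·.symm) fun ⟨h, hab⟩ ↦ ⟨h.symm, fun ⟨hb, ha⟩ ↦ hab ⟨ha, hb⟩⟩⟩ }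
    (fun x ↦ by
      by_cases hx : x ∈ K
      · exact Or.inl hx
      · exact Or.inr ((S.mem_A_or_mem_B x).elim (fun h ↦ Or.inr ⟨h, hx⟩) Or.inl))
    (fun a b h ↦ by
      rcases S.adj_A_or_adj_B h with h | h
      · by_cases hab : a ∈ K ∧ b ∈ K
        · exact Or.inl ⟨hab.1, hab.2, h⟩
        · exact Or.inr (Or.inr ⟨h, hab⟩)
      · exact Or.inr (Or.inl h))
    (fun _ _ ⟨ha, hb, h⟩ hB ↦ hB.elim (S.not_adj_B_of_adj_A h) fun hn ↦ hn.2 ⟨ha, hb⟩)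

section restrictA

variable (S : Separation G) {K : Set V}
  (hK : ∀ ⦃a b⦄, S.A.Adj a b → a ∈ K → b ∉ K → a ∈ S.B.verts)

@[simp] lemma restrictA_A_verts : (S.restrictA K hK).A.verts = K := rfl

@[simp] lemma restrictA_B_verts :
    (S.restrictA K hK).B.verts = S.B.verts ∪ (S.A.verts \ K) := rfl

lemma boundary_restrictA : (S.restrictA K hK).boundary = K ∩ S.B.verts := by
  ext x
  simp only [boundary, restrictA_A_verts, restrictA_B_verts, Set.mem_inter_iff, Set.mem_union,
    Set.mem_sdiff]
  tauto

end restrictA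

lemma mem_B_of_adj_reachWithin (S : Separation G) {X : Set V} (hX : X ⊆ S.B.verts) (w : V) :
    ∀ ⦃a b⦄, S.A.Adj a b → a ∈ G.reachWithin (S.A.verts \ X) w ∪ X →
      b ∉ G.reachWithin (S.A.verts \ X) w ∪ X → a ∈ S.B.verts := by
  rintro a b h (ha | ha) hb
  · exact absurd (Or.inl (mem_reachWithin_of_adj ha h.adj_sub
      ⟨h.snd_mem, fun hbX ↦ hb (Or.inr hbX)⟩)) hb
  · exact hX ha

def beyond (S₀ S : Separation G) : Separation G :=
  ofCover (S.A ⊓ S₀.B ⊔ (⊥ : G.Subgraph).induce S₀.boundary) (S.B ⊔ S₀.A)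
    (fun x ↦ by
      by_cases hB : x ∈ S.B.verts
      · exact Or.inr (Or.inl hB)
      by_cases hA₀ : x ∈ S₀.A.verts
      · exact Or.inr (Or.inr hA₀)
      exact Or.inl (Or.inl ⟨(S.mem_A_or_mem_B x).resolve_right hB,
        (S₀.mem_A_or_mem_B x).resolve_left hA₀⟩))
    (fun _ _ h ↦ by
      rcases S.adj_A_or_adj_B h with h' | h'
      · rcases S₀.adj_A_or_adj_B h with h₀ | h₀
        · exact Or.inr (Or.inr h₀)
        · exact Or.inl (Or.inl ⟨h', h₀⟩)
      · exact Or.inr (Or.inl h'))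
    (fun _ _ hA hB ↦ by
      rcases hA with ⟨hA, hB₀⟩ | ⟨-, -, h⟩
      · exact hB.elim (S.not_adj_B_of_adj_A hA) fun hA₀ ↦ S₀.not_adj_B_of_adj_A hA₀ hB₀
      · exact Subgraph.not_bot_adj h)

section beyond

variable (S₀ S : Separation G)

lemma subset_boundary_beyond : S₀.boundary ⊆ (S₀.beyond S).boundary :=
  fun _ hx ↦ ⟨Or.inr hx, Or.inr hx.1⟩

lemma diff_subset_beyond_A_verts : S.A.verts \ S₀.A.verts ⊆ (S₀.beyond S).A.verts :=
  fun x ⟨hA, hA₀⟩ ↦ Or.inl ⟨hA, (S₀.mem_A_or_mem_B x).resolve_left hA₀⟩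

lemma boundary_beyond_subset :
    (S₀.beyond S).boundary ⊆ S₀.boundary ∪ S.boundary \ S₀.A.verts := by
  rintro x ⟨⟨hA, hB₀⟩ | hx, hB | hA₀⟩
  · by_cases hA₀ : x ∈ S₀.A.verts
    · exact Or.inl ⟨hA₀, hB₀⟩
    · exact Or.inr ⟨⟨hA, hB⟩, hA₀⟩
  · exact Or.inl ⟨hA₀, hB₀⟩
  · exact Or.inl hx
  · exact Or.inl hx

end beyond

lemma exists_walk_of_mem_support (S : Separation G) {w u a : V} (hw : w ∈ S.A.verts)
    (q : G.Walk w u) (ha : a ∈ q.support) (haA : a ∉ S.A.verts) :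
    ∃ x, (∃ z ∈ S.boundary, z ∈ q.support ∧ G.Adj z x) ∧
      ∃ r : G.Walk x a, ∀ c ∈ r.support, c ∈ q.support ∧ c ∉ S.A.verts := by
  classical
  have hsub : ∀ c ∈ (q.takeUntil a ha).reverse.support, c ∈ q.support := fun c hc ↦
    q.support_takeUntil_subset_support ha (by simpa using hc)
  obtain ⟨z, hz, hzq, x, hzx, r, hr⟩ := (q.takeUntil a ha).reverse.exists_adj_walk_notMem haA hw
  exact ⟨x, ⟨z, S.mem_boundary_of_adj hz (hr x r.start_mem_support).2 hzx, hsub z hzq, hzx⟩,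
    r, fun c hc ↦ ⟨hsub c (hr c hc).1, (hr c hc).2⟩⟩

lemma ncard_boundary_union_biUnion_le [Finite V] (S₀ : Separation G) {N : Set V}
    {f : V → Separation G} {m : ℕ} (hf₀ : ∀ x ∈ N, S₀.boundary ⊆ (f x).boundary)
    (hf : ∀ x ∈ N, (f x).order ≤ S₀.order + m) :
    (S₀.boundary ∪ ⋃ x ∈ N, (f x).boundary).ncard ≤ S₀.order + N.ncard * m := by
  have hsub : S₀.boundary ∪ ⋃ x ∈ N, (f x).boundary ⊆
      S₀.boundary ∪ ⋃ x ∈ N, (f x).boundary \ S₀.boundary := by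
    refine Set.union_subset Set.subset_union_left (Set.iUnion₂_subset fun x hx c hc ↦ ?_)
    by_cases hc₀ : c ∈ S₀.boundary
    · exact Or.inl hc₀
    · exact Or.inr (Set.mem_biUnion hx ⟨hc, hc₀⟩)
  refine (Set.ncard_le_ncard hsub).trans <| (Set.ncard_union_le _ _).trans <| Nat.add_le_add_left
    (Set.ncard_biUnion_le_ncard_mul (Set.toFinite N) fun x hx ↦ ?_) _
  have := Set.ncard_sdiff_add_ncard_of_subset (hf₀ x hx)
  have := hf x hx
  rw [order_eq_ncard_boundary, order_eq_ncard_boundary] at this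
  omega

end Separation

namespace Tangle

variable {V : Type*} {G : SimpleGraph V} {θ : ℕ} (T : Tangle G θ)

lemma mem_of_cover {S S₁ S₂ : Separation G} (h₁ : S₁ ∈ T.mem) (h₂ : S₂ ∈ T.mem)
    (hS : S.order < θ) (hv : ∀ x, x ∈ S₁.A.verts ∨ x ∈ S₂.A.verts ∨ x ∈ S.B.verts)
    (he : ∀ ⦃a b⦄, G.Adj a b → S₁.A.Adj a b ∨ S₂.A.Adj a b ∨ S.B.Adj a b) : S ∈ T.mem :=
  (T.oriented S hS).resolve_right fun h ↦ T.not_three _ h₁ _ h₂ _ h <|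
    Subgraph.eq_top_of_forall _ (by simpa [or_assoc] using hv) (by simpa [or_assoc] using he)

lemma ofVerts_mem {W : Set V} (hW : W.ncard < θ) : Separation.ofVerts W ∈ T.mem := by
  have h₀ : Separation.ofVerts ∅ ∈ T.mem :=
    (T.oriented _ (by simpa using hW.pos)).resolve_right
      fun h ↦ T.small _ h Subgraph.verts_top
  exact T.mem_of_cover h₀ h₀ (by simpa using hW) (fun _ ↦ Or.inr (Or.inr trivial))
    fun _ _ h ↦ Or.inr (Or.inr h)

lemma rank_eq_zero_of_subset_singleton (hθ : 2 ≤ θ) {v : V} (hv : ∀ u, ¬G.Adj v u) {X : Set V}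
    (hX : X ⊆ {v}) : T.rank X = 0 := by
  have hE : ∀ ⦃a b⦄, G.Adj a b → ((⊤ : G.Subgraph).deleteVerts {v}).Adj a b := fun a b h ↦
    ⟨⟨trivial, fun ha ↦ hv b (ha ▸ h)⟩, ⟨trivial, fun hb ↦ hv a (hb ▸ h.symm)⟩, h⟩
  let S : Separation G := .ofCover ((⊥ : G.Subgraph).induce {v}) ((⊤ : G.Subgraph).deleteVerts {v})
    (fun x ↦ (em (x = v)).imp id fun h ↦ ⟨trivial, h⟩) (fun _ _ h ↦ Or.inr (hE h))
    (fun _ _ h ↦ (Subgraph.not_bot_adj h.2.2).elim)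
  have hS : S.order = 0 := by
    simp [S, Separation.order, Separation.ofCover]
  have hv₁ := T.ofVerts_mem (W := {v}) (by rw [Set.ncard_singleton]; omega)
  have hSmem : S ∈ T.mem := T.mem_of_cover hv₁ hv₁ (by omega)
    (fun x ↦ (em (x = v)).imp id fun h ↦ Or.inr ⟨trivial, h⟩) fun _ _ h ↦ Or.inr (Or.inr (hE h))
  exact Nat.eq_zero_of_le_zero (Nat.sInf_le (Or.inr ⟨S, hSmem, hX, hS⟩))

lemma union_mem {S₁ S₂ : Separation G} (h₁ : S₁ ∈ T.mem) (h₂ : S₂ ∈ T.mem)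
    (hS : (S₁.union S₂).order < θ) : S₁.union S₂ ∈ T.mem := by
  refine T.mem_of_cover h₁ h₂ hS (fun x ↦ ?_) fun _ _ h ↦ ?_
  · rcases S₁.mem_A_or_mem_B x with h₁ | h₁ <;> rcases S₂.mem_A_or_mem_B x with h₂ | h₂ <;>
      simp [Separation.union, Separation.ofCover, h₁, h₂]
  · rcases S₁.adj_A_or_adj_B h with h₁ | h₁ <;> rcases S₂.adj_A_or_adj_B h with h₂ | h₂ <;>
      simp [Separation.union, Separation.ofCover, h₁, h₂]

section Finite

variable [Finite V]

lemma restrictA_mem {S : Separation G} (hS : S ∈ T.mem) {K : Set V}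
    (hK : ∀ ⦃a b⦄, S.A.Adj a b → a ∈ K → b ∉ K → a ∈ S.B.verts) (hKA : K ⊆ S.A.verts) :
    S.restrictA K hK ∈ T.mem := by
  refine T.mem_of_cover hS hS ?_ (fun x ↦ ?_) fun _ _ h ↦ ?_
  · rw [Separation.order_eq_ncard_boundary, Separation.boundary_restrictA]
    exact (Set.ncard_le_ncard (Set.inter_subset_inter_left _ hKA)).trans_lt (T.order_lt S hS)
  · exact (S.mem_A_or_mem_B x).imp_right fun h ↦ Or.inr (Or.inl h)
  · exact (S.adj_A_or_adj_B h).imp_right fun h ↦ Or.inr (Or.inl h)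

lemma beyond_mem {S₀ S : Separation G} (h₀ : S₀ ∈ T.mem) (h : S ∈ T.mem)
    (hθ : (S₀.boundary ∪ S.boundary \ S₀.A.verts).ncard < θ) : S₀.beyond S ∈ T.mem :=
  T.mem_of_cover h h₀ ((Set.ncard_le_ncard (S₀.boundary_beyond_subset S)).trans_lt hθ)
    (fun x ↦ (S.mem_A_or_mem_B x).imp_right fun h ↦ Or.inr (Or.inl h))
    fun _ _ h ↦ (S.adj_A_or_adj_B h).imp_right fun h ↦ Or.inr (Or.inl h)

lemma exists_mem_sup_of_boundary_subset {X Z : Set V} {S₀ : Separation G} {𝒮 : Set (Separation G)}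
    (h₀ : S₀ ∈ T.mem) (h𝒮 : 𝒮 ⊆ T.mem) (hX₀ : X ⊆ S₀.boundary) (hX : ∀ S ∈ 𝒮, X ⊆ S.boundary)
    (hZ₀ : S₀.boundary ⊆ Z) (hZ : ∀ S ∈ 𝒮, S.boundary ⊆ Z) (hZθ : Z.ncard < θ) :
    ∃ U ∈ T.mem, X ⊆ U.boundary ∧ U.boundary ⊆ Z ∧ S₀.A.verts ⊆ U.A.verts ∧
      ∀ S ∈ 𝒮, S.A.verts ⊆ U.A.verts := by
  induction 𝒮, Set.toFinite 𝒮 using Set.Finite.induction_on with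
  | empty => exact ⟨S₀, h₀, hX₀, hZ₀, subset_rfl, by simp⟩
  | @insert S 𝒮 _ _ ih =>
    obtain ⟨U, hU, hXU, hUZ, hU₀, hU𝒮⟩ := ih (fun _ h ↦ h𝒮 (Or.inr h))
      (fun S' h ↦ hX S' (Or.inr h)) (fun S' h ↦ hZ S' (Or.inr h))
    have hbd : (S.union U).boundary ⊆ Z := (S.boundary_union_subset U).trans <|
      Set.union_subset (Set.inter_subset_left.trans (hZ S (Or.inl rfl)))
        (Set.inter_subset_left.trans hUZ)
    refine ⟨S.union U, T.union_mem (h𝒮 (Or.inl rfl)) hU ((Set.ncard_le_ncard hbd).trans_lt hZθ),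
      fun x hx ↦ ?_, hbd, hU₀.trans Set.subset_union_right, ?_⟩
    · have hxS := hX S (Or.inl rfl) hx
      exact ⟨Or.inl hxS.1, hxS.2, (hXU hx).2⟩
    · rintro S' (rfl | h)
      · exact Set.subset_union_left
      · exact (hU𝒮 S' h).trans Set.subset_union_right

end Finite

/-- `Y` has rank at most `m` relative to the restricted tangle `T ∖ X`, whose separations are
those of `T` with `X` in the boundary, of order lowered by `|X|`. -/
def RestrictedRankLE (X Y : Set V) (m : ℕ) : Prop :=
  θ ≤ X.ncard + m ∨ ∃ S ∈ T.mem, X ⊆ S.boundary ∧ Y ⊆ S.A.verts ∧ S.order ≤ X.ncard + m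

def NexusRankLE (k m : ℕ) : Prop :=
  ∀ (X : Set V) (w : V) (Q : Set ((u : V) × G.Walk w u)), (∀ q ∈ Q, ∀ a ∈ q.2.support, a ∉ X) →
    (∀ q ∈ Q, T.RestrictedRankLE X {a | a ∈ q.2.support} k) →
    T.RestrictedRankLE X (⋃ q ∈ Q, {a | a ∈ q.2.support}) m

structure IsRooted (X : Set V) (w : V) (m : ℕ) (S : Separation G) : Prop where
  mem : S ∈ T.mem
  subset_boundary : X ⊆ S.boundary
  root_mem : w ∈ S.A.verts
  order_le : S.order ≤ X.ncard + m
  subset_reachWithin : S.A.verts \ X ⊆ G.reachWithin (S.A.verts \ X) w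

variable {T}

lemma restrictedRankLE_empty_iff {Y : Set V} {m : ℕ} :
    T.RestrictedRankLE ∅ Y m ↔ T.rank Y ≤ m := by
  simp only [RestrictedRankLE, Set.ncard_empty, zero_add, Set.empty_subset, true_and]
  constructor
  · rintro (h | ⟨S, hS, hY, hm⟩)
    · exact (Nat.sInf_le (Or.inl rfl)).trans h
    · exact (Nat.sInf_le (Or.inr ⟨S, hS, hY, rfl⟩)).trans hm
  · intro h
    rcases Nat.sInf_mem (⟨θ, Or.inl rfl⟩ :
        ({θ} ∪ {n | ∃ S ∈ T.mem, Y ⊆ S.A.verts ∧ S.order = n}).Nonempty) with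
      h' | ⟨S, hS, hY, hS'⟩
    · exact Or.inl ((Set.mem_singleton_iff.1 h') ▸ h)
    · exact Or.inr ⟨S, hS, hY, hS' ▸ h⟩

lemma RestrictedRankLE.mono {X Y Y' : Set V} {m : ℕ} (h : T.RestrictedRankLE X Y m)
    (hY : Y' ⊆ Y) : T.RestrictedRankLE X Y' m :=
  h.imp_right fun ⟨S, hS, hX, hYS, hm⟩ ↦ ⟨S, hS, hX, hY.trans hYS, hm⟩

lemma restrictedRankLE_boundary {S : Separation G} (hS : S ∈ T.mem) {Y : Set V}
    (hY : Y ⊆ S.A.verts) (m : ℕ) : T.RestrictedRankLE S.boundary Y m :=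
  Or.inr ⟨S, hS, subset_rfl, hY, Nat.le_add_right _ _⟩

variable [Finite V]

lemma restrictedRankLE_biUnion_zero {ι : Type*} {I : Set ι} {X : Set V} {Y : ι → Set V}
    (hY : ∀ i ∈ I, T.RestrictedRankLE X (Y i) 0) : T.RestrictedRankLE X (⋃ i ∈ I, Y i) 0 := by
  rcases le_or_gt θ X.ncard with hθ | hθ
  · exact Or.inl hθ
  set 𝒮 := {S | S ∈ T.mem ∧ X ⊆ S.boundary ∧ S.order ≤ X.ncard}
  obtain ⟨U, hU, hXU, hUX, -, hU𝒮⟩ := T.exists_mem_sup_of_boundary_subset (𝒮 := 𝒮)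
    (T.ofVerts_mem hθ) (fun _ hS ↦ hS.1) (by simp) (fun _ hS ↦ hS.2.1) (by simp)
    (fun _ hS ↦ (Set.eq_of_subset_of_ncard_le hS.2.1 hS.2.2).ge) hθ
  refine Or.inr ⟨U, hU, hXU, Set.iUnion₂_subset fun i hi ↦ ?_, Set.ncard_le_ncard hUX⟩
  obtain ⟨S, hS, hXS, hYS, hm⟩ := (hY i hi).resolve_left hθ.not_ge
  exact hYS.trans (hU𝒮 S ⟨hS, hXS, hm⟩)

lemma nexusRankLE_zero : T.NexusRankLE 0 0 :=
  fun _ _ _ _ hQ ↦ restrictedRankLE_biUnion_zero hQ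

variable (T) in
lemma exists_maximalFor_isRooted {X : Set V} (w : V) {m : ℕ} (hm : 1 ≤ m)
    (hθ : X.ncard + m < θ) : ∃ S, MaximalFor (T.IsRooted X w m) (fun S ↦ S.A.verts) S := by
  have hw : (insert w X).ncard ≤ X.ncard + m := (Set.ncard_insert_le w X).trans (by omega)
  refine Set.Finite.exists_maximalFor _ _ (Set.toFinite _) ⟨.ofVerts (insert w X),
    T.ofVerts_mem (by omega), by simp [Set.subset_insert], by simp, by simpa using hw, ?_⟩
  rintro x ⟨hx, hxX⟩
  obtain rfl : x = w := (Set.mem_insert_iff.1 hx).resolve_right hxX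
  exact start_mem_reachWithin ⟨hx, hxX⟩

lemma IsRooted.union_restrictA {X : Set V} {w : V} {m : ℕ} {S₀ S : Separation G}
    (hS₀ : T.IsRooted X w m S₀) (hS : S ∈ T.mem) (hXS : X ⊆ S.boundary)
    (hord : S.order ≤ X.ncard + m) (hA₀C : S₀.A.verts \ X ⊆ G.reachWithin (S.A.verts \ X) w) :
    T.IsRooted X w m (S₀.union
      (S.restrictA _ (S.mem_B_of_adj_reachWithin (hXS.trans Set.inter_subset_right) w))) := by
  set C := G.reachWithin (S.A.verts \ X) w
  set Sh := S.restrictA _ (S.mem_B_of_adj_reachWithin (hXS.trans Set.inter_subset_right) w)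
  have hCA : C ⊆ S.A.verts \ X := reachWithin_subset
  have hSh : Sh ∈ T.mem := T.restrictA_mem hS _
    (Set.union_subset (hCA.trans Set.sdiff_subset) (hXS.trans Set.inter_subset_left))
  have hUbd : (S₀.union Sh).boundary ⊆ S.boundary := by
    refine (S₀.boundary_union_subset Sh).trans (Set.union_subset ?_ ?_)
    · rintro z ⟨hz, hzB | ⟨-, hzK⟩⟩ <;> by_cases hzX : z ∈ X
      · exact hXS hzX
      · exact ⟨(hCA (hA₀C ⟨hz.1, hzX⟩)).1, hzB⟩
      · exact hXS hzX
      · exact absurd (Or.inl (hA₀C ⟨hz.1, hzX⟩)) hzK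
    · rintro z ⟨⟨hzK, hzB | ⟨-, hzK'⟩⟩, -⟩
      · exact ⟨hzK.elim (fun h ↦ (hCA h).1) fun h ↦ (hXS h).1, hzB⟩
      · exact absurd hzK hzK'
  refine ⟨T.union_mem hS₀.mem hSh ((Set.ncard_le_ncard hUbd).trans_lt (T.order_lt S hS)),
    fun x hx ↦ ⟨Or.inl (hS₀.subset_boundary hx).1, (hS₀.subset_boundary hx).2, Or.inl (hXS hx).2⟩,
    Or.inl hS₀.root_mem, (Set.ncard_le_ncard hUbd).trans hord, ?_⟩
  rintro x ⟨hx | hx | hx, hxX⟩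
  · exact reachWithin_mono (Set.sdiff_subset_sdiff_left Set.subset_union_left)
      (hS₀.subset_reachWithin ⟨hx, hxX⟩)
  · exact reachWithin_mono
      (fun y hy ↦ show y ∈ (S₀.union Sh).A.verts \ X from ⟨Or.inr (Or.inl hy), (hCA hy).2⟩)
      (reachWithin_subset_reachWithin_reachWithin hx)
  · exact absurd hx hxX

lemma reachWithin_subset_of_maximalFor {X : Set V} {w : V} {m : ℕ} {S₀ S : Separation G}
    (hS₀ : MaximalFor (T.IsRooted X w m) (fun S ↦ S.A.verts) S₀) (hS : S ∈ T.mem)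
    (hXS : X ⊆ S.boundary) (hw : w ∈ S.A.verts \ X) (hord : S.order ≤ X.ncard + m)
    (hSS₀ : S.boundary ∩ S₀.A.verts ⊆ X) : G.reachWithin (S.A.verts \ X) w ⊆ S₀.A.verts := by
  -- a walk inside `A₀ - X` never uses an edge of `S.B`, as these start in `∂S ∩ A₀ ⊆ X`
  have hA₀C : S₀.A.verts \ X ⊆ G.reachWithin (S.A.verts \ X) w :=
    hS₀.1.subset_reachWithin.trans <| reachWithin_subset_of_closed (start_mem_reachWithin hw)
      fun a ha b haD hbD hab ↦ mem_reachWithin_of_adj ha hab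
        ⟨((S.adj_A_or_adj_B hab).resolve_right fun h ↦
          haD.2 (hSS₀ ⟨⟨(reachWithin_subset ha).1, h.fst_mem⟩, haD.1⟩)).snd_mem, hbD.2⟩
  exact fun c hc ↦
    hS₀.2 (hS₀.1.union_restrictA hS hXS hord hA₀C) Set.subset_union_left (Or.inr (Or.inl hc))

lemma restrictedRankLE_diff_of_not_subset {X : Set V} {n : ℕ} {S₀ S : Separation G}
    (h₀ : S₀ ∈ T.mem) (hXS₀ : X ⊆ S₀.A.verts) (hS : S ∈ T.mem) (hXS : X ⊆ S.boundary)
    (hord : S.order ≤ X.ncard + (n + 1)) (hSS₀ : ¬S.boundary ∩ S₀.A.verts ⊆ X) :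
    T.RestrictedRankLE S₀.boundary (S.A.verts \ S₀.A.verts) n := by
  obtain ⟨u, hu, huX⟩ := Set.not_subset.1 hSS₀
  have hcard : (S.boundary \ S₀.A.verts).ncard ≤ n := by
    have hsplit := Set.ncard_sdiff_add_ncard_of_subset (Set.insert_subset hu.1 hXS)
    have hle := Set.ncard_le_ncard
      (Set.sdiff_subset_sdiff_right (Set.insert_subset hu.2 hXS₀) : S.boundary \ S₀.A.verts ⊆ _)
    rw [Set.ncard_insert_of_notMem huX] at hsplit
    rw [Separation.order_eq_ncard_boundary] at hord
    omega
  rcases le_or_gt θ (S₀.boundary.ncard + n) with hθ | hθ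
  · exact Or.inl hθ
  have hbd : (S₀.boundary ∪ S.boundary \ S₀.A.verts).ncard ≤ S₀.boundary.ncard + n :=
    (Set.ncard_union_le _ _).trans (by omega)
  exact Or.inr ⟨S₀.beyond S, T.beyond_mem h₀ hS (by omega), S₀.subset_boundary_beyond S,
    S₀.diff_subset_beyond_A_verts S, (Set.ncard_le_ncard (S₀.boundary_beyond_subset S)).trans hbd⟩

lemma restrictedRankLE_support_diff {X : Set V} {w u : V} {n : ℕ} {S₀ : Separation G}
    (hS₀ : MaximalFor (T.IsRooted X w (n + 1)) (fun S ↦ S.A.verts) S₀)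
    (hθ : X.ncard + (n + 1) < θ) (q : G.Walk w u) (hqX : ∀ a ∈ q.support, a ∉ X)
    (hq : T.RestrictedRankLE X {a | a ∈ q.support} (n + 1)) :
    T.RestrictedRankLE S₀.boundary {a | a ∈ q.support ∧ a ∉ S₀.A.verts} n := by
  obtain ⟨S, hS, hXS, hqS, hord⟩ := hq.resolve_left hθ.not_ge
  by_cases hSS₀ : S.boundary ∩ S₀.A.verts ⊆ X
  · have hq₀ : {a | a ∈ q.support} ⊆ S₀.A.verts := fun a ha ↦
      reachWithin_subset_of_maximalFor hS₀ hS hXS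
        ⟨hqS q.start_mem_support, hqX w q.start_mem_support⟩ hord hSS₀
        (mem_reachWithin_of_mem_support (fun y hy ↦ ⟨hqS hy, hqX y hy⟩) ha)
    exact restrictedRankLE_boundary hS₀.1.mem ((Set.sep_subset _ _).trans hq₀) n
  · exact (restrictedRankLE_diff_of_not_subset hS₀.1.mem (fun x hx ↦ (hS₀.1.subset_boundary hx).1)
      hS hXS hord hSS₀).mono fun a ⟨ha, ha₀⟩ ↦ ⟨hqS ha, ha₀⟩

lemma exists_walk_restrictedRankLE {X : Set V} {w u a : V} {n : ℕ} {S₀ : Separation G}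
    (hS₀ : MaximalFor (T.IsRooted X w (n + 1)) (fun S ↦ S.A.verts) S₀)
    (hθ : X.ncard + (n + 1) < θ) (q : G.Walk w u) (hqX : ∀ c ∈ q.support, c ∉ X)
    (hq : T.RestrictedRankLE X {c | c ∈ q.support} (n + 1)) (ha : a ∈ q.support)
    (ha₀ : a ∉ S₀.A.verts) :
    ∃ x ∈ ⋃ z ∈ S₀.boundary \ X, G.neighborSet z, ∃ r : G.Walk x a,
      (∀ c ∈ r.support, c ∉ S₀.A.verts) ∧
        T.RestrictedRankLE S₀.boundary {c | c ∈ r.support} n := by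
  obtain ⟨x, ⟨z, hz, hzq, hzx⟩, r, hr⟩ := S₀.exists_walk_of_mem_support hS₀.1.root_mem q ha ha₀
  exact ⟨x, Set.mem_biUnion (show z ∈ S₀.boundary \ X from ⟨hz, hqX z hzq⟩) hzx, r,
    fun c hc ↦ (hr c hc).2, (restrictedRankLE_support_diff hS₀ hθ q hqX hq).mono hr⟩

theorem NexusRankLE.succ {d' n m : ℕ} (hd' : 0 < d') (hdeg : ∀ x, (G.neighborSet x).ncard ≤ d')
    (ih : T.NexusRankLE n m) : T.NexusRankLE (n + 1) (n + 1 + (n + 1) * d' * m) := by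
  intro X w Q hQX hQ
  rcases le_or_gt θ (X.ncard + (n + 1 + (n + 1) * d' * m)) with hθ | hθ
  · exact Or.inl hθ
  have hm : m ≤ (n + 1) * d' * m := Nat.le_mul_of_pos_left m (by positivity)
  obtain ⟨S₀, hS₀⟩ := T.exists_maximalFor_isRooted (X := X) w (m := n + 1) le_add_self (by omega)
  obtain ⟨h₀, hXS₀, -, hord₀, -⟩ := hS₀.1
  set N := ⋃ z ∈ S₀.boundary \ X, G.neighborSet z
  set R : (x : V) → Set ((u : V) × G.Walk x u) := fun x ↦
    {r | (∀ c ∈ r.2.support, c ∉ S₀.A.verts) ∧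
      T.RestrictedRankLE S₀.boundary {c | c ∈ r.2.support} n}
  have hR : ∀ x, ∃ S ∈ T.mem, S₀.boundary ⊆ S.boundary ∧
      (⋃ r ∈ R x, {c | c ∈ r.2.support}) ⊆ S.A.verts ∧ S.order ≤ S₀.order + m :=
    fun x ↦ (ih _ x (R x) (fun r hr c hc hc₀ ↦ hr.1 c hc hc₀.1) fun r hr ↦ hr.2).resolve_left
      (by rw [← Separation.order_eq_ncard_boundary]; omega)
  choose f hf hf₀ hfR hford using hR
  have hN : N.ncard * m ≤ (n + 1) * d' * m := by
    refine Nat.mul_le_mul_right m <|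
      (Set.ncard_biUnion_le_ncard_mul (Set.toFinite _) fun z _ ↦ hdeg z).trans ?_
    have := Set.ncard_sdiff_add_ncard_of_subset hXS₀
    rw [Separation.order_eq_ncard_boundary] at hord₀
    exact Nat.mul_le_mul_right _ (by omega)
  have hfZ : ∀ x ∈ N, (f x).boundary ⊆ S₀.boundary ∪ ⋃ x ∈ N, (f x).boundary := fun x hx ↦
    Set.subset_union_of_subset_right (Set.subset_biUnion_of_mem (u := fun x ↦ (f x).boundary) hx) _
  have hZ := S₀.ncard_boundary_union_biUnion_le (N := N) (fun x _ ↦ hf₀ x) fun x _ ↦ hford x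
  obtain ⟨U, hU, hXU, hUZ, hA₀U, hfU⟩ := T.exists_mem_sup_of_boundary_subset
    (Z := S₀.boundary ∪ ⋃ x ∈ N, (f x).boundary) (𝒮 := f '' N) h₀
    (by rintro _ ⟨x, -, rfl⟩; exact hf x) hXS₀ (by rintro _ ⟨x, -, rfl⟩; exact hXS₀.trans (hf₀ x))
    Set.subset_union_left
    (by rintro _ ⟨x, hx, rfl⟩; exact hfZ x hx)
    (by omega)
  refine Or.inr ⟨U, hU, hXU, Set.iUnion₂_subset fun q hq a ha ↦ ?_,
    (Set.ncard_le_ncard hUZ).trans (by omega)⟩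
  by_cases ha₀ : a ∈ S₀.A.verts
  · exact hA₀U ha₀
  obtain ⟨x, hx, r, hr⟩ :=
    exists_walk_restrictedRankLE hS₀ (by omega) q.2 (hQX q hq) (hQ q hq) ha ha₀
  exact hfU (f x) ⟨x, hx, rfl⟩
    (hfR x (Set.mem_biUnion (show ⟨a, r⟩ ∈ R x from hr) r.end_mem_support))

end Tangle

def nexusBound (d' : ℕ) : ℕ → ℕ
  | 0 => 0
  | n + 1 => n + 1 + (n + 1) * d' * nexusBound d' n

lemma nexusBound_le {d' : ℕ} (hd' : 0 < d') (k : ℕ) : nexusBound d' k ≤ (k * d') ^ k := by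
  induction k with
  | zero => simp [nexusBound]
  | succ n ih =>
    rcases n.eq_zero_or_pos with rfl | hn
    · simpa [nexusBound, Nat.one_le_iff_ne_zero] using hd'.ne'
    have hpow : (n * d') ^ n + 1 ≤ ((n + 1) * d') ^ n :=
      Nat.pow_lt_pow_left (Nat.mul_lt_mul_of_pos_right (Nat.lt_succ_self n) hd') hn.ne'
    have hd'n : n + 1 ≤ (n + 1) * d' := Nat.le_mul_of_pos_right _ hd'
    calc nexusBound d' (n + 1) = n + 1 + (n + 1) * d' * nexusBound d' n := rfl
      _ ≤ (n + 1) * d' * ((n * d') ^ n + 1) := by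
        rw [mul_add, mul_one]
        have := Nat.mul_le_mul_left ((n + 1) * d') ih
        omega
      _ ≤ (n + 1) * d' * ((n + 1) * d') ^ n := Nat.mul_le_mul_left _ hpow
      _ = ((n + 1) * d') ^ (n + 1) := by ring

lemma Tangle.nexusRankLE_nexusBound {V : Type*} [Finite V] {G : SimpleGraph V} {θ : ℕ}
    (T : Tangle G θ) {d' : ℕ} (hd' : 0 < d') (hdeg : ∀ x, (G.neighborSet x).ncard ≤ d')
    (k : ℕ) : T.NexusRankLE k (nexusBound d' k) := by
  induction k with
  | zero => exact Tangle.nexusRankLE_zero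
  | succ n ih => exact ih.succ hd' hdeg

theorem nexus_rank_general {V : Type*} [Fintype V] {G : SimpleGraph V}
    (d' k θ : ℕ) (hθ : (k + 1) ^ 2 ≤ θ)
    (hdeg : ∀ x : V, (G.neighborSet x).ncard ≤ d')
    (T : Tangle G θ) (v : V)
    (Pnex : Set ((u : V) × G.Walk v u))
    (hrank : ∀ p ∈ Pnex, T.rank {x | x ∈ p.2.support} ≤ k) :
    T.rank (⋃ p ∈ Pnex, {x | x ∈ p.2.support}) ≤ (k * d') ^ k := by
  have hPX : ∀ p ∈ Pnex, ∀ a ∈ p.2.support, a ∉ (∅ : Set V) := fun _ _ _ _ ↦ id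
  have hP : ∀ p ∈ Pnex, T.RestrictedRankLE ∅ {x | x ∈ p.2.support} k :=
    fun p hp ↦ Tangle.restrictedRankLE_empty_iff.2 (hrank p hp)
  obtain rfl | hk := k.eq_zero_or_pos
  · exact (Tangle.restrictedRankLE_empty_iff.1 (Tangle.nexusRankLE_zero ∅ v Pnex hPX hP)).trans
      (by simp)
  obtain rfl | hd' := d'.eq_zero_or_pos
  · have hv : ∀ u, ¬G.Adj v u := fun u h ↦
      ((Set.ncard_pos (Set.toFinite _)).2 ⟨u, h⟩).ne' (Nat.le_zero.1 (hdeg v))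
    refine (T.rank_eq_zero_of_subset_singleton (by nlinarith) hv
      (Set.iUnion₂_subset fun ⟨u, p⟩ _ x hx ↦ ?_)).trans_le (Nat.zero_le _)
    cases p with
    | nil => simpa using hx
    | cons h _ => exact absurd h (hv _)
  exact (Tangle.restrictedRankLE_empty_iff.1
    (T.nexusRankLE_nexusBound hd' hdeg k ∅ v Pnex hPX hP)).trans (nexusBound_le hd' k)

/-- Nexus-rank theorem: let `G` have maximum degree at most `d'`, let `𝒯` be a
tangle in `G` of order at least `(k+1)²`, let `v ∈ V(G)` and let `Pnex` be a
`v`-nexus (a set of paths each with one end `v`) each of whose paths has rank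
at most `k` relative to `𝒯`. Then the union of the vertex sets of the paths of
`Pnex` has rank at most `(k d')^k`. -/
theorem nexus_rank {V : Type*} [Fintype V] {G : SimpleGraph V}
    (d' k θ : ℕ) (hθ : (k + 1) ^ 2 ≤ θ)
    (hdeg : ∀ x : V, (G.neighborSet x).ncard ≤ d')
    (T : Tangle G θ) (v : V)
    (Pnex : Set ((u : V) × G.Walk v u))
    (hpath : ∀ p ∈ Pnex, p.2.IsPath)
    (hrank : ∀ p ∈ Pnex, T.rank {x | x ∈ p.2.support} ≤ k) :
    T.rank (⋃ p ∈ Pnex, {x | x ∈ p.2.support}) ≤ (k * d') ^ k :=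
  nexus_rank_general d' k θ hθ hdeg T v Pnex hrank
end

section
/- Let G be a graph with a set 𝒯 of separations constructed from t pairwise disjoint connected subgraphs C₁,…,C_t that pairwise have an edge between them: for each separation (A,B) of G of order < θ, where θ ≤ ⌈2t/3⌉, exactly one of the sides A∖V(B), B∖V(A) includes some C_i; put (A,B) in 𝒯 when B∖V(A) includes some C_i. Then 𝒯 is a tangle of order θ in G. -/
namespace Separation

variable {V : Type*} {G : SimpleGraph V}

lemma verts_cover (S : Separation G) : S.A.verts ∪ S.B.verts = Set.univ := by
  have h := congrArg SimpleGraph.Subgraph.verts S.union_eq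
  simpa [SimpleGraph.Subgraph.verts_sup] using h

lemma adj_or (S : Separation G) {u v : V} (h : G.Adj u v) : S.A.Adj u v ∨ S.B.Adj u v := by
  have h2 : (S.A ⊔ S.B).Adj u v := by rw [S.union_eq]; exact SimpleGraph.Subgraph.top_adj.2 h
  exact SimpleGraph.Subgraph.sup_adj.1 h2

lemma not_adj_both (S : Separation G) {u v : V} (hA : S.A.Adj u v) (hB : S.B.Adj u v) : False := by
  have h : s(u, v) ∈ (S.A ⊓ S.B).edgeSet :=
    SimpleGraph.Subgraph.mem_edgeSet.2 (SimpleGraph.Subgraph.inf_adj.2 ⟨hA, hB⟩)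
  rw [S.edge_inter] at h
  exact h

/-- If a connected subgraph `H` avoids the separator and one vertex lies in `A`,
then all of it lies in `A`. -/
lemma sideA (S : Separation G) (H : G.Subgraph)
    (hd : ∀ v ∈ H.verts, ¬(v ∈ S.A.verts ∧ v ∈ S.B.verts))
    {x y : H.verts} (h : H.coe.Reachable x y) (hx : (x : V) ∈ S.A.verts) :
    (y : V) ∈ S.A.verts := by
  obtain ⟨p⟩ := h
  induction p with
  | nil => exact hx
  | @cons a b c ha _ ih =>
    apply ih
    have hG : G.Adj (a : V) (b : V) := H.adj_sub ((SimpleGraph.Subgraph.coe_adj H a b) ▸ ha)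
    rcases S.adj_or hG with h1 | h2
    · exact h1.snd_mem
    · exact absurd ⟨hx, h2.fst_mem⟩ (hd a a.2)

/-- A connected subgraph avoiding the separator lies wholly on one side. -/
lemma untouched_side (S : Separation G) (H : G.Subgraph) (hc : H.Connected)
    (hd : ∀ v ∈ H.verts, ¬(v ∈ S.A.verts ∧ v ∈ S.B.verts)) :
    H.verts ⊆ S.A.verts \ S.B.verts ∨ H.verts ⊆ S.B.verts \ S.A.verts := by
  obtain ⟨w, hw⟩ := hc.nonempty
  have hwu : w ∈ S.A.verts ∪ S.B.verts := by rw [S.verts_cover]; trivial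
  have hd' : ∀ v ∈ H.verts, ¬(v ∈ S.flip.A.verts ∧ v ∈ S.flip.B.verts) := by
    intro v hv hvb
    exact hd v hv ⟨hvb.2, hvb.1⟩
  rcases hwu with h | h
  · left
    intro v hv
    have hvA : v ∈ S.A.verts :=
      S.sideA H hd (hc.preconnected ⟨w, hw⟩ ⟨v, hv⟩) h
    exact ⟨hvA, fun hB => hd v hv ⟨hvA, hB⟩⟩
  · right
    intro v hv
    have hvB : v ∈ S.B.verts :=
      S.flip.sideA H hd' (hc.preconnected ⟨w, hw⟩ ⟨v, hv⟩) h
    exact ⟨hvB, fun hA => hd v hv ⟨hA, hvB⟩⟩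

lemma flip_order (S : Separation G) : S.flip.order = S.order := by
  simp [order, flip, Set.inter_comm]

end Separation

/-- A clique-minor model `C₁,…,C_t` (pairwise disjoint connected subgraphs,
pairwise joined by an edge) induces a tangle of order `θ ≤ ⌈2t/3⌉`: orienting
each separation `(A,B)` of order `< θ` so that `B ∖ V(A)` includes some `Cᵢ`
gives a well-defined orientation (exactly one side works) satisfying the
tangle axioms. -/
theorem clique_minor_tangle {V : Type*} [Fintype V] {G : SimpleGraph V}
    (t θ : ℕ) (hθ1 : 1 ≤ θ) (hθ : θ ≤ (2 * t + 2) / 3)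
    (C : Fin t → G.Subgraph)
    (hconn : ∀ i, (C i).Connected)
    (hdisj : ∀ i j, i ≠ j → Disjoint (C i).verts (C j).verts)
    (hedge : ∀ i j, i ≠ j → ∃ u v, u ∈ (C i).verts ∧ v ∈ (C j).verts ∧ G.Adj u v) :
    ∀ Tset : Set (Separation G),
      Tset = {S | S.order < θ ∧ ∃ i, (C i).verts ⊆ S.B.verts \ S.A.verts} →
      (∀ S : Separation G, S.order < θ → (S ∈ Tset ↔ S.flip ∉ Tset)) ∧
      (∀ S₁ ∈ Tset, ∀ S₂ ∈ Tset, ∀ S₃ ∈ Tset,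
        S₁.A ⊔ S₂.A ⊔ S₃.A ≠ (⊤ : G.Subgraph)) ∧
      (∀ S ∈ Tset, S.A.verts ≠ Set.univ) := by
  classical
  intro Tset hT
  subst hT
  have h3θ : θ * 3 ≤ 2 * t + 2 := (Nat.le_div_iff_mul_le (by norm_num)).mp hθ
  have hCne : ∀ i : Fin t, (C i).verts.Nonempty := fun i => (hconn i).nonempty
  -- the number of branch sets meeting a set X is at most |X|
  have htouch : ∀ X : Set V,
      {i : Fin t | ((C i).verts ∩ X).Nonempty}.ncard ≤ X.ncard := by
    intro X
    by_cases hs : {i : Fin t | ((C i).verts ∩ X).Nonempty}.Nonempty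
    · obtain ⟨i₀, hi₀⟩ := hs
      set f : Fin t → V := fun i =>
        if h : ((C i).verts ∩ X).Nonempty then h.some else hi₀.some with hf
      apply Set.ncard_le_ncard_of_injOn f
      · intro i hi
        have he : f i = hi.some := by simp only [hf]; exact dif_pos hi
        rw [he]; exact hi.some_mem.2
      · intro i hi j hj hij
        by_contra hne
        have he1 : f i = hi.some := by simp only [hf]; exact dif_pos hi
        have he2 : f j = hj.some := by simp only [hf]; exact dif_pos hj
        have h1 : f i ∈ (C i).verts := by rw [he1]; exact hi.some_mem.1
        have h2 : f j ∈ (C j).verts := by rw [he2]; exact hj.some_mem.1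
        rw [hij] at h1
        exact Set.disjoint_left.mp (hdisj i j hne) h1 h2
    · rw [Set.not_nonempty_iff_eq_empty.mp hs]; simp
  -- mutual exclusivity of the two sides
  have excl : ∀ (S : Separation G) (i j : Fin t),
      (C i).verts ⊆ S.A.verts \ S.B.verts →
      (C j).verts ⊆ S.B.verts \ S.A.verts → False := by
    intro S i j hi hj
    by_cases hij : i = j
    · subst hij
      obtain ⟨v, hv⟩ := hCne i
      exact (hj hv).2 (hi hv).1
    · obtain ⟨u, v, hu, hv, huv⟩ := hedge i j hij
      rcases S.adj_or huv with h | h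
      · exact (hj hv).2 h.snd_mem
      · exact (hi hu).2 h.fst_mem
  have horder : ∀ S : Separation G, S.order < θ →
      {i : Fin t | ((C i).verts ∩ (S.A.verts ∩ S.B.verts)).Nonempty}.ncard < θ := by
    intro S hS
    exact lt_of_le_of_lt (htouch _) hS
  -- each separation of low order has a side containing a branch set
  have key : ∀ S : Separation G, S.order < θ →
      (∃ i, (C i).verts ⊆ S.A.verts \ S.B.verts) ∨
      (∃ i, (C i).verts ⊆ S.B.verts \ S.A.verts) := by
    intro S hS
    have hθt : θ ≤ t := by omega
    have h1 : {i : Fin t | ((C i).verts ∩ (S.A.verts ∩ S.B.verts)).Nonempty}.ncard < t :=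
      lt_of_lt_of_le (horder S hS) hθt
    have h2 : ∃ i : Fin t, ¬((C i).verts ∩ (S.A.verts ∩ S.B.verts)).Nonempty := by
      by_contra hcon
      push_neg at hcon
      have he : {i : Fin t | ((C i).verts ∩ (S.A.verts ∩ S.B.verts)).Nonempty} = Set.univ :=
        Set.eq_univ_of_forall hcon
      rw [he, Set.ncard_univ, Nat.card_eq_fintype_card, Fintype.card_fin] at h1
      omega
    obtain ⟨i, hi⟩ := h2
    have hd : ∀ v ∈ (C i).verts, ¬(v ∈ S.A.verts ∧ v ∈ S.B.verts) := by
      intro v hv hvc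
      exact hi ⟨v, hv, hvc.1, hvc.2⟩
    rcases S.untouched_side (C i) (hconn i) hd with h | h
    · exact Or.inl ⟨i, h⟩
    · exact Or.inr ⟨i, h⟩
  -- any branch set meeting V(A) meets the separator (for oriented separations)
  have touchA : ∀ S : Separation G, S.order < θ →
      (∃ j, (C j).verts ⊆ S.B.verts \ S.A.verts) →
      ∀ i, ((C i).verts ∩ S.A.verts).Nonempty →
      ((C i).verts ∩ (S.A.verts ∩ S.B.verts)).Nonempty := by
    rintro S hS ⟨j, hj⟩ i hi
    by_contra hcon
    have hd : ∀ v ∈ (C i).verts, ¬(v ∈ S.A.verts ∧ v ∈ S.B.verts) := by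
      intro v hv hvc; exact hcon ⟨v, hv, hvc.1, hvc.2⟩
    rcases S.untouched_side (C i) (hconn i) hd with h | h
    · exact excl S i j h hj
    · obtain ⟨v, hv1, hv2⟩ := hi
      exact (h hv1).2 hv2
  refine ⟨?_, ?_, ?_⟩
  · -- orientation is well defined
    intro S hS
    constructor
    · rintro ⟨_, i, hi⟩ ⟨_, j, hj⟩
      exact excl S j i hj hi
    · intro hns
      refine ⟨hS, ?_⟩
      rcases key S hS with ⟨i, hi⟩ | h
      · exact absurd ⟨by rwa [S.flip_order], i, hi⟩ hns
      · exact h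
  · -- no three small sides cover G
    rintro S₁ ⟨h1o, j1, hj1⟩ S₂ ⟨h2o, j2, hj2⟩ S₃ ⟨h3o, j3, hj3⟩ hsup
    set M : Separation G → Finset (Fin t) := fun S =>
      Finset.univ.filter
        (fun i => ((C i).verts ∩ (S.A.verts ∩ S.B.verts)).Nonempty) with hM
    have hMcard : ∀ S : Separation G, S.order < θ → (M S).card ≤ θ - 1 := by
      intro S hS
      have h := horder S hS
      have he : {i : Fin t | ((C i).verts ∩ (S.A.verts ∩ S.B.verts)).Nonempty}
          = ↑(M S) := by
        ext i; simp [hM]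
      rw [he, Set.ncard_coe_finset] at h
      omega
    have hmemA : ∀ S : Separation G, S.order < θ →
        (∃ j, (C j).verts ⊆ S.B.verts \ S.A.verts) →
        ∀ i, ((C i).verts ∩ S.A.verts).Nonempty → i ∈ M S := by
      intro S hS hj i hi
      simp only [hM, Finset.mem_filter, Finset.mem_univ, true_and]
      exact touchA S hS hj i hi
    have hverts : S₁.A.verts ∪ S₂.A.verts ∪ S₃.A.verts = Set.univ := by
      have h := congrArg SimpleGraph.Subgraph.verts hsup
      simpa [SimpleGraph.Subgraph.verts_sup] using h
    have hmem1 : ∀ i, i ∈ M S₁ ∨ i ∈ M S₂ ∨ i ∈ M S₃ := by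
      intro i
      obtain ⟨v, hv⟩ := hCne i
      have hvu : v ∈ S₁.A.verts ∪ S₂.A.verts ∪ S₃.A.verts := by
        rw [hverts]; trivial
      rcases hvu with (h | h) | h
      · exact Or.inl (hmemA S₁ h1o ⟨j1, hj1⟩ i ⟨v, hv, h⟩)
      · exact Or.inr (Or.inl (hmemA S₂ h2o ⟨j2, hj2⟩ i ⟨v, hv, h⟩))
      · exact Or.inr (Or.inr (hmemA S₃ h3o ⟨j3, hj3⟩ i ⟨v, hv, h⟩))
    have hmem2 : ∀ i j, i ≠ j →
        (i ∈ M S₁ ∧ j ∈ M S₁) ∨ (i ∈ M S₂ ∧ j ∈ M S₂) ∨ (i ∈ M S₃ ∧ j ∈ M S₃) := by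
      intro i j hij
      obtain ⟨u, v, hu, hv, huv⟩ := hedge i j hij
      have hadj : (S₁.A ⊔ S₂.A ⊔ S₃.A).Adj u v := by
        rw [hsup]; exact SimpleGraph.Subgraph.top_adj.2 huv
      rcases SimpleGraph.Subgraph.sup_adj.1 hadj with h | h
      · rcases SimpleGraph.Subgraph.sup_adj.1 h with h' | h'
        · exact Or.inl ⟨hmemA S₁ h1o ⟨j1, hj1⟩ i ⟨u, hu, h'.fst_mem⟩,
            hmemA S₁ h1o ⟨j1, hj1⟩ j ⟨v, hv, h'.snd_mem⟩⟩
        · exact Or.inr (Or.inl ⟨hmemA S₂ h2o ⟨j2, hj2⟩ i ⟨u, hu, h'.fst_mem⟩,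
            hmemA S₂ h2o ⟨j2, hj2⟩ j ⟨v, hv, h'.snd_mem⟩⟩)
      · exact Or.inr (Or.inr ⟨hmemA S₃ h3o ⟨j3, hj3⟩ i ⟨u, hu, h.fst_mem⟩,
          hmemA S₃ h3o ⟨j3, hj3⟩ j ⟨v, hv, h.snd_mem⟩⟩)
    by_cases htwo : ∀ i : Fin t,
        2 ≤ (if i ∈ M S₁ then 1 else 0) + (if i ∈ M S₂ then 1 else 0)
          + (if i ∈ M S₃ then (1 : ℕ) else 0)
    · -- every branch set meets at least two separators
      have hsum : ∑ i : Fin t,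
          ((if i ∈ M S₁ then 1 else 0) + (if i ∈ M S₂ then 1 else 0)
            + (if i ∈ M S₃ then (1 : ℕ) else 0))
          = (M S₁).card + (M S₂).card + (M S₃).card := by
        rw [Finset.sum_add_distrib, Finset.sum_add_distrib]
        have hb : ∀ s : Finset (Fin t),
            ∑ i : Fin t, (if i ∈ s then (1 : ℕ) else 0) = s.card := by
          intro s
          rw [Finset.sum_ite_mem, Finset.univ_inter, Finset.sum_const,
            smul_eq_mul, mul_one]
        rw [hb, hb, hb]
      have hge : 2 * t ≤ ∑ i : Fin t,
          ((if i ∈ M S₁ then 1 else 0) + (if i ∈ M S₂ then 1 else 0)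
            + (if i ∈ M S₃ then (1 : ℕ) else 0)) := by
        calc 2 * t = ∑ _i : Fin t, 2 := by
              simp [Finset.sum_const, Finset.card_univ, Nat.mul_comm]
          _ ≤ _ := Finset.sum_le_sum (fun i _ => htwo i)
      rw [hsum] at hge
      have c1 := hMcard S₁ h1o
      have c2 := hMcard S₂ h2o
      have c3 := hMcard S₃ h3o
      omega
    · -- some branch set meets only one separator: all others meet that one too
      push_neg at htwo
      obtain ⟨i, hi2⟩ := htwo
      have huniv : ∃ S : Separation G, S.order < θ ∧ (M S) = Finset.univ := by
        rcases hmem1 i with h1 | h1 | h1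
        · have hn2 : i ∉ M S₂ := by
            intro hc; rw [if_pos h1, if_pos hc] at hi2; omega
          have hn3 : i ∉ M S₃ := by
            intro hc; rw [if_pos h1, if_pos hc] at hi2; omega
          refine ⟨S₁, h1o, Finset.eq_univ_iff_forall.mpr fun j => ?_⟩
          by_cases hji : j = i
          · rw [hji]; exact h1
          · rcases hmem2 j i hji with ⟨hj, _⟩ | ⟨_, hc⟩ | ⟨_, hc⟩
            · exact hj
            · exact absurd hc hn2
            · exact absurd hc hn3
        · have hn1 : i ∉ M S₁ := by
            intro hc; rw [if_pos h1, if_pos hc] at hi2; omega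
          have hn3 : i ∉ M S₃ := by
            intro hc; rw [if_pos h1, if_pos hc] at hi2; omega
          refine ⟨S₂, h2o, Finset.eq_univ_iff_forall.mpr fun j => ?_⟩
          by_cases hji : j = i
          · rw [hji]; exact h1
          · rcases hmem2 j i hji with ⟨_, hc⟩ | ⟨hj, _⟩ | ⟨_, hc⟩
            · exact absurd hc hn1
            · exact hj
            · exact absurd hc hn3
        · have hn1 : i ∉ M S₁ := by
            intro hc; rw [if_pos h1, if_pos hc] at hi2; omega
          have hn2 : i ∉ M S₂ := by
            intro hc; rw [if_pos h1, if_pos hc] at hi2; omega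
          refine ⟨S₃, h3o, Finset.eq_univ_iff_forall.mpr fun j => ?_⟩
          by_cases hji : j = i
          · rw [hji]; exact h1
          · rcases hmem2 j i hji with ⟨_, hc⟩ | ⟨_, hc⟩ | ⟨hj, _⟩
            · exact absurd hc hn1
            · exact absurd hc hn2
            · exact hj
      obtain ⟨S, hSo, hSu⟩ := huniv
      have hc := hMcard S hSo
      rw [hSu, Finset.card_univ, Fintype.card_fin] at hc
      omega
  · -- small sides do not cover all vertices
    rintro S ⟨_, i, hi⟩ hun
    obtain ⟨v, hv⟩ := hCne i
    exact (hi hv).2 (by rw [hun]; trivial)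
end

section
/- Let D and D' be d-regular graphs on the same number of vertices, and let G_D, G_{D'} be obtained from them by the gadget construction: replace each vertex v_i by a copy R_i of a fixed gadget graph R having exactly d vertices of degree d−1 (forming a set X_i) and all other vertices of degree d, and for each edge v_i v_j of D add an edge between X_i and X_j so that the new edges form a perfect matching on the union of the X_i. Suppose every subgraph of G_D isomorphic to R is one of R₁,…,R_m, and similarly for G_{D'}. If G_D ≅ G_{D'} then D ≅ D'. -/
/-!
An isomorphism `φ : G_D ≃g G_D'` sends each gadget copy `R_i` onto a subgraph of `G_D'` isomorphic
to `R`, which by hypothesis is a gadget copy `R'_σ(i)`. Since the parts are nonempty and `φ` is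
injective, `σ` is a permutation of `Fin m`, and since `D` (resp. `D'`) is recovered from `G_D`
(resp. `G_D'`) by contracting the parts, `σ` is an isomorphism `D ≃g D'`. When `R` is empty every
part is empty, so `D` and `D'` are both edgeless.
-/

open Function

namespace SimpleGraph

variable {V W W' ι ι' : Type*}

def IsContraction (D : SimpleGraph ι) (G : SimpleGraph W) (p : W → ι) : Prop :=
  ∀ i j, i ≠ j → (D.Adj i j ↔ ∃ u v, p u = i ∧ p v = j ∧ G.Adj u v)

def IsContraction.iso {D : SimpleGraph ι} {D' : SimpleGraph ι'} {G : SimpleGraph W}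
    {G' : SimpleGraph W'} {p : W → ι} {p' : W' → ι'} (hD : D.IsContraction G p)
    (hD' : D'.IsContraction G' p') (φ : G ≃g G') (σ : ι ≃ ι') (hσ : ∀ w, p' (φ w) = σ (p w)) :
    D ≃g D' where
  toEquiv := σ
  map_rel_iff' {a b} := by
    by_cases hab : a = b
    · subst hab; simp
    rw [hD a b hab, hD' _ _ (σ.injective.ne hab)]
    simp only [φ.surjective.exists, hσ, σ.apply_eq_iff_eq, φ.map_adj_iff]

theorem exists_subgraph_verts_eq_of_iso_induce {R : SimpleGraph V} {G : SimpleGraph W}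
    {s : Set W} (e : R ≃g G.induce s) : ∃ H : G.Subgraph, H.verts = s ∧ Nonempty (R ≃g H.coe) :=
  ⟨(⊤ : G.Subgraph).induce s, rfl, ⟨e.trans
    { toEquiv := .refl _, map_rel_iff' := fun {a b} => ⟨fun h => h.2.2, fun h => ⟨a.2, b.2, h⟩⟩ }⟩⟩

end SimpleGraph

theorem exists_equiv_comp_eq_of_image_fiber {W W' ι : Type*} [Finite ι] {f : W → W'}
    (hf : Injective f) {p : W → ι} {p' : W' → ι} (hp : Surjective p)
    (h : ∀ i, ∃ k, f '' {w | p w = i} = {w | p' w = k}) :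
    ∃ σ : ι ≃ ι, ∀ w, p' (f w) = σ (p w) := by
  choose σ hσ using h
  have hcomm : ∀ w, p' (f w) = σ (p w) := fun w => by
    have : f w ∈ f '' {v | p v = p w} := Set.mem_image_of_mem f rfl
    rwa [hσ] at this
  have hinj : Injective σ := by
    intro i j hij
    obtain ⟨u, rfl⟩ := hp i
    have : f u ∈ f '' {w | p w = j} := by
      rw [hσ]; exact (hcomm u).trans hij
    exact hf.mem_set_image.mp this
  exact ⟨Equiv.ofBijective σ (Finite.injective_iff_bijective.mp hinj), hcomm⟩

theorem gadget_reconstruction_general {β W W' : Type*}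
    (m : ℕ) (R : SimpleGraph β)
    (D D' : SimpleGraph (Fin m))
    (G : SimpleGraph W) (G' : SimpleGraph W')
    (part : W → Fin m) (part' : W' → Fin m)
    (hcopy : ∀ i, Nonempty (R ≃g G.induce {w | part w = i}))
    (hcross : ∀ i j, i ≠ j →
      (D.Adj i j ↔ ∃ u v, part u = i ∧ part v = j ∧ G.Adj u v))
    (hcross' : ∀ i j, i ≠ j →
      (D'.Adj i j ↔ ∃ u v, part' u = i ∧ part' v = j ∧ G'.Adj u v))
    (hsubR' : ∀ H : G'.Subgraph, Nonempty (R ≃g H.coe) → ∃ i, H.verts = {w | part' w = i}) :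
    Nonempty (G ≃g G') → Nonempty (D ≃g D') := by
  rintro ⟨φ⟩
  have himage : ∀ i, ∃ k, φ '' {w | part w = i} = {w | part' w = k} := fun i => by
    obtain ⟨H, hH, hR⟩ := SimpleGraph.exists_subgraph_verts_eq_of_iso_induce
      ((φ.induce φ.injective.injOn.bijOn_image).comp (hcopy i).some)
    exact hH ▸ hsubR' H hR
  obtain ⟨σ, hσ⟩ : ∃ σ : Fin m ≃ Fin m, ∀ w, part' (φ w) = σ (part w) := by
    cases isEmpty_or_nonempty β with
    | inl hβ => exact ⟨.refl _, fun w => hβ.elim ((hcopy (part w)).some.symm ⟨w, rfl⟩)⟩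
    | inr hβ =>
      have hpart : Surjective part := fun i =>
        ⟨(hcopy i).some (Classical.arbitrary β), ((hcopy i).some _).2⟩
      exact exists_equiv_comp_eq_of_image_fiber φ.injective hpart himage
  exact ⟨SimpleGraph.IsContraction.iso hcross hcross' φ σ hσ⟩

/-- Gadget reconstruction: let `D, D'` be `d`-regular graphs on `m` vertices,
and let `G, G'` be obtained from them by the gadget construction with a fixed
gadget graph `R` having exactly `d` vertices of degree `d-1` and all other
vertices of degree `d`: each vertex `i` is replaced by a copy of `R` (the part
`part⁻¹ {i}` induces a copy of `R`), cross edges between distinct parts form a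
matching (each vertex has at most one cross neighbour) and distinct parts
`i, j` are joined by a cross edge exactly when `i, j` are adjacent in `D`.
Suppose moreover that every subgraph of `G` (resp. `G'`) isomorphic to `R` is
one of the gadget copies. If `G ≅ G'` then `D ≅ D'`. -/
theorem gadget_reconstruction {β W W' : Type*} [Fintype β] [Fintype W] [Fintype W']
    (d m : ℕ) (R : SimpleGraph β)
    (hRX : {v : β | (R.neighborSet v).ncard = d - 1}.ncard = d)
    (hRdeg : ∀ v : β, (R.neighborSet v).ncard = d - 1 ∨ (R.neighborSet v).ncard = d)
    (D D' : SimpleGraph (Fin m))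
    (hDreg : ∀ i, (D.neighborSet i).ncard = d)
    (hD'reg : ∀ i, (D'.neighborSet i).ncard = d)
    (G : SimpleGraph W) (G' : SimpleGraph W')
    (hGreg : ∀ u : W, (G.neighborSet u).ncard = d)
    (hG'reg : ∀ u : W', (G'.neighborSet u).ncard = d)
    (part : W → Fin m) (part' : W' → Fin m)
    (hcopy : ∀ i, Nonempty (R ≃g G.induce {w | part w = i}))
    (hcopy' : ∀ i, Nonempty (R ≃g G'.induce {w | part' w = i}))
    (hcross : ∀ i j, i ≠ j →
      (D.Adj i j ↔ ∃ u v, part u = i ∧ part v = j ∧ G.Adj u v))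
    (hcross' : ∀ i j, i ≠ j →
      (D'.Adj i j ↔ ∃ u v, part' u = i ∧ part' v = j ∧ G'.Adj u v))
    (hmatch : ∀ u : W, ({v | G.Adj u v ∧ part v ≠ part u}).ncard ≤ 1)
    (hmatch' : ∀ u : W', ({v | G'.Adj u v ∧ part' v ≠ part' u}).ncard ≤ 1)
    (hsubR : ∀ H : G.Subgraph, Nonempty (R ≃g H.coe) → ∃ i, H.verts = {w | part w = i})
    (hsubR' : ∀ H : G'.Subgraph, Nonempty (R ≃g H.coe) → ∃ i, H.verts = {w | part' w = i}) :
    Nonempty (G ≃g G') → Nonempty (D ≃g D') :=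
  gadget_reconstruction_general m R D D' G G' part part' hcopy hcross hcross' hsubR'
end
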